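/- arXiv:2310.05617 — 8 statements merged into one kernel-verified Lean document; each statement's English description precedes it below -/
import Mathlib

section
/- Let C be a unital C*-algebra and let α be a *-automorphism of C. The following are equivalent: (1) C is α-simple, i.e., the only closed two-sided ideals I of C with α(I) = I are {0} and C; (2) every nonzero closed two-sided ideal I of C satisfying I ⊆ α(I) equals C; (3) for every nonzero closed two-sided ideal I of C there exists N ∈ ℤ_{>0} such that α^{-1}(I) + α^{-2}(I) + ⋯ + α^{-N}(I) = C. -/
/-!
If `I ⊆ α(I)`, the closure of the increasing union `⋃ₙ αⁿ(I)` is an `α`-invariant closed ideal;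
for arbitrary `I`, the closure of `∑_{k ≥ 1} α⁻ᵏ(I)` is a closed ideal `K` with `K ⊆ α(K)`.
When such a closure is all of `C`, the ideal before taking the closure meets the ball of radius
one around `1`, which consists of invertible elements, so it already contains `1`. Since it is an
increasing union, `1` then lies in a single member: some `αⁿ(I)`, resp. some finite partial sum.
-/

namespace TwoSidedIdeal

section Lattice

variable {R : Type*} [NonUnitalNonAssocRing R]

theorem mem_iSup_of_directed {ι : Sort*} [Nonempty ι] {I : ι → TwoSidedIdeal R}
    (hI : Directed (· ≤ ·) I) {x : R} : x ∈ ⨆ i, I i ↔ ∃ i, x ∈ I i := by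
  refine ⟨fun hx => ?_, fun ⟨i, hi⟩ => le_iSup I i hi⟩
  let J : TwoSidedIdeal R := .mk' (⋃ i, (I i : Set R))
    (Set.mem_iUnion.2 ⟨Classical.arbitrary ι, zero_mem _⟩)
    (fun hx hy => by
      obtain ⟨i, hi⟩ := Set.mem_iUnion.1 hx
      obtain ⟨j, hj⟩ := Set.mem_iUnion.1 hy
      obtain ⟨k, hik, hjk⟩ := hI i j
      exact Set.mem_iUnion.2 ⟨k, (I k).add_mem (hik hi) (hjk hj)⟩)
    (fun hx => by
      obtain ⟨i, hi⟩ := Set.mem_iUnion.1 hx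
      exact Set.mem_iUnion.2 ⟨i, (I i).neg_mem hi⟩)
    (fun hy => by
      obtain ⟨i, hi⟩ := Set.mem_iUnion.1 hy
      exact Set.mem_iUnion.2 ⟨i, (I i).mul_mem_left _ _ hi⟩)
    (fun hx => by
      obtain ⟨i, hi⟩ := Set.mem_iUnion.1 hx
      exact Set.mem_iUnion.2 ⟨i, (I i).mul_mem_right _ _ hi⟩)
  have hJ : ⨆ i, I i ≤ J := iSup_le fun i x hx => (mem_mk' ..).2 (Set.mem_iUnion.2 ⟨i, hx⟩)
  simpa [J] using hJ hx

theorem mem_iSup_iff_exists_sum {ι : Type*} [Fintype ι] {I : ι → TwoSidedIdeal R} {x : R} :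
    x ∈ ⨆ i, I i ↔ ∃ f : ι → R, (∀ i, f i ∈ I i) ∧ ∑ i, f i = x := by
  classical
  refine ⟨fun hx => ?_, fun ⟨f, hf, hfx⟩ => hfx ▸ sum_mem fun i _ => le_iSup I i (hf i)⟩
  let J : TwoSidedIdeal R := .mk' {x | ∃ f : ι → R, (∀ i, f i ∈ I i) ∧ ∑ i, f i = x}
    ⟨0, fun i => zero_mem _, by simp⟩
    (fun ⟨f, hf, hfx⟩ ⟨g, hg, hgy⟩ =>
      ⟨f + g, fun i => (I i).add_mem (hf i) (hg i), by simp [Finset.sum_add_distrib, hfx, hgy]⟩)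
    (fun ⟨f, hf, hfx⟩ =>
      ⟨-f, fun i => (I i).neg_mem (hf i), by simp [Finset.sum_neg_distrib, hfx]⟩)
    (fun {a _} ⟨f, hf, hfx⟩ =>
      ⟨fun i => a * f i, fun i => (I i).mul_mem_left _ _ (hf i), by rw [← Finset.mul_sum, hfx]⟩)
    (fun {_ b} ⟨f, hf, hfx⟩ =>
      ⟨fun i => f i * b, fun i => (I i).mul_mem_right _ _ (hf i), by rw [← Finset.sum_mul, hfx]⟩)
  have hJ : ⨆ i, I i ≤ J := iSup_le fun i y hy => (mem_mk' ..).2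
    ⟨Pi.single i y, fun j => by rcases eq_or_ne j i with rfl | hji <;> simp [*], by simp⟩
  simpa [J] using hJ hx

end Lattice

theorem exists_eq_top_of_iSup_eq_top {R : Type*} [NonAssocRing R] {ι : Sort*} [Nonempty ι]
    {I : ι → TwoSidedIdeal R} (hI : Directed (· ≤ ·) I) (h : ⨆ i, I i = ⊤) : ∃ i, I i = ⊤ :=
  ((mem_iSup_of_directed hI).1 (h ▸ mem_top R)).imp fun _ => (one_mem_iff _).1

section Topology

variable {R : Type*} [NonUnitalNonAssocRing R] [TopologicalSpace R] [IsTopologicalRing R]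

def topologicalClosure (I : TwoSidedIdeal R) : TwoSidedIdeal R :=
  .mk' (closure I) (subset_closure I.zero_mem)
    (fun hx hy => map_mem_closure₂ continuous_add hx hy fun _ ha _ hb => I.add_mem ha hb)
    (fun hx => map_mem_closure continuous_neg hx fun _ ha => I.neg_mem ha)
    (fun hy => map_mem_closure (continuous_const_mul _) hy fun _ hb => I.mul_mem_left _ _ hb)
    (fun {_ y} hx => map_mem_closure (f := (· * y)) (continuous_mul_const y) hx
      fun _ ha => I.mul_mem_right _ _ ha)

@[simp]
theorem coe_topologicalClosure (I : TwoSidedIdeal R) :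
    (I.topologicalClosure : Set R) = closure I := by
  rw [topologicalClosure, coe_mk']

theorem le_topologicalClosure (I : TwoSidedIdeal R) : I ≤ I.topologicalClosure := by
  simpa [← SetLike.coe_subset_coe] using subset_closure

theorem isClosed_topologicalClosure (I : TwoSidedIdeal R) :
    IsClosed (I.topologicalClosure : Set R) := by
  simp

theorem topologicalClosure_mono {I J : TwoSidedIdeal R} (h : I ≤ J) :
    I.topologicalClosure ≤ J.topologicalClosure := by
  simpa [← SetLike.coe_subset_coe] using closure_mono h

end Topology

theorem topologicalClosure_eq_top_iff {R : Type*} [NormedRing R] [HasSummableGeomSeries R]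
    {I : TwoSidedIdeal R} : I.topologicalClosure = ⊤ ↔ I = ⊤ := by
  refine ⟨fun h => ?_, fun h => top_le_iff.1 (h ▸ le_topologicalClosure I)⟩
  by_contra hI
  refine I.asIdeal.closure_ne_top (fun hI' => hI ?_) ?_
  · simpa [one_mem_iff] using (Ideal.eq_top_iff_one _).1 hI'
  · rw [Ideal.eq_top_iff_one, ← SetLike.mem_coe, Ideal.coe_closure, coe_asIdeal,
      ← coe_topologicalClosure, h]
    trivial

end TwoSidedIdeal

namespace RingEquiv

open TwoSidedIdeal

section

variable {R S : Type*} [NonUnitalNonAssocRing R] [NonUnitalNonAssocRing S]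

@[simp]
theorem coe_mapTwoSidedIdeal (e : R ≃+* S) (I : TwoSidedIdeal R) :
    (e.mapTwoSidedIdeal I : Set S) = e '' I := by
  ext x
  simp only [mapTwoSidedIdeal_apply, SetLike.mem_coe, mem_comap, Set.mem_image]
  exact ⟨fun h => ⟨_, h, e.apply_symm_apply x⟩, by rintro ⟨y, hy, rfl⟩; simpa⟩

theorem coe_iterate_mapTwoSidedIdeal (e : R ≃+* R) (n : ℕ) (I : TwoSidedIdeal R) :
    ((⇑e.mapTwoSidedIdeal)^[n] I : Set R) = (⇑e)^[n] '' I := by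
  induction n with
  | zero => simp
  | succ n ih => rw [Function.iterate_succ_apply', Function.iterate_succ', Set.image_comp,
      coe_mapTwoSidedIdeal, ih]

variable [TopologicalSpace R] [IsTopologicalRing R] [TopologicalSpace S] [IsTopologicalRing S]

theorem mapTwoSidedIdeal_topologicalClosure (e : R ≃+* S) (he : Continuous e)
    (he' : Continuous e.symm) (I : TwoSidedIdeal R) :
    e.mapTwoSidedIdeal I.topologicalClosure = (e.mapTwoSidedIdeal I).topologicalClosure :=
  SetLike.coe_injective <| by
    simpa using (Homeomorph.mk e.toEquiv he he').image_closure I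

end

open Function

theorem eq_bot_or_eq_top_of_mapTwoSidedIdeal_eq {R : Type*} [NonUnitalNonAssocRing R]
    [TopologicalSpace R] (e : R ≃+* R)
    (h : ∀ I : TwoSidedIdeal R, IsClosed (I : Set R) → I ≠ ⊥ →
      ∃ N, 0 < N ∧ ⨆ k : Fin N, (⇑e.symm.mapTwoSidedIdeal)^[k + 1] I = ⊤)
    {I : TwoSidedIdeal R} (hIc : IsClosed (I : Set R)) (hIe : e.mapTwoSidedIdeal I = I) :
    I = ⊥ ∨ I = ⊤ := by
  refine or_iff_not_imp_left.2 fun hI => ?_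
  obtain ⟨N, -, hN⟩ := h I hIc hI
  have hψI : e.symm.mapTwoSidedIdeal I = I := by
    rw [← mapTwoSidedIdeal_symm, OrderIso.symm_apply_eq, hIe]
  exact top_le_iff.1 (hN ▸ iSup_le fun k => (iterate_fixed hψI _).le)

variable {R : Type*} [NormedRing R] [HasSummableGeomSeries R] (e : R ≃+* R)

theorem eq_top_of_le_mapTwoSidedIdeal (he : Continuous e) (he' : Continuous e.symm)
    (h : ∀ I : TwoSidedIdeal R, IsClosed (I : Set R) → e.mapTwoSidedIdeal I = I → I = ⊥ ∨ I = ⊤)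
    {I : TwoSidedIdeal R} (hI : I ≠ ⊥) (hIe : I ≤ e.mapTwoSidedIdeal I) : I = ⊤ := by
  set φ := e.mapTwoSidedIdeal
  have hmono : Monotone fun n => φ^[n] I := φ.monotone.monotone_iterate_of_le_map hIe
  set J := ⨆ n, φ^[n] I
  have hJ : φ J = J := by
    simp only [J, φ.map_iSup, ← iterate_succ_apply' φ]
    exact hmono.iSup_nat_add 1
  have hK : φ J.topologicalClosure = J.topologicalClosure := by
    rw [mapTwoSidedIdeal_topologicalClosure e he he', hJ]
  obtain hK | hK := h _ (isClosed_topologicalClosure J) hK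
  · exact absurd (eq_bot_iff.2 <| hK ▸ (le_iSup (fun n => φ^[n] I) 0).trans
      (le_topologicalClosure J)) hI
  · obtain ⟨n, hn⟩ := exists_eq_top_of_iSup_eq_top hmono.directed_le
      (topologicalClosure_eq_top_iff.1 hK)
    exact (φ.injective.iterate n) (hn.trans (iterate_fixed φ.map_top n).symm)

theorem exists_iSup_iterate_symm_eq_top (he : Continuous e) (he' : Continuous e.symm)
    (h : ∀ I : TwoSidedIdeal R, IsClosed (I : Set R) → I ≠ ⊥ → I ≤ e.mapTwoSidedIdeal I → I = ⊤)
    {I : TwoSidedIdeal R} (hI : I ≠ ⊥) :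
    ∃ N, 0 < N ∧ ⨆ k : Fin N, (⇑e.symm.mapTwoSidedIdeal)^[k + 1] I = ⊤ := by
  set ψ := e.symm.mapTwoSidedIdeal
  set S : ℕ → TwoSidedIdeal R := fun N => ⨆ k : Fin N, ψ^[k + 1] I
  have hS : Monotone S :=
    monotone_nat_of_le_succ fun N => iSup_le fun k => le_iSup_of_le k.castSucc le_rfl
  set J := ⨆ N, S N
  have hψJ : ψ J ≤ J := by
    simp only [J, S, ψ.map_iSup]
    refine iSup_mono' fun N => ⟨N + 1, iSup_le fun k => le_iSup_of_le k.succ ?_⟩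
    rw [← iterate_succ_apply' ψ]
    rfl
  have hK : J.topologicalClosure ≤ e.mapTwoSidedIdeal J.topologicalClosure := by
    rw [← OrderIso.symm_apply_le, mapTwoSidedIdeal_symm,
      mapTwoSidedIdeal_topologicalClosure e.symm he' he]
    exact topologicalClosure_mono hψJ
  have hKbot : J.topologicalClosure ≠ ⊥ := by
    refine ne_bot_of_le_ne_bot (ψ.map_bot ▸ ψ.injective.ne hI) ?_
    calc ψ I ≤ S 1 := le_iSup_of_le 0 le_rfl
      _ ≤ J := le_iSup S 1
      _ ≤ J.topologicalClosure := le_topologicalClosure J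
  obtain ⟨N, hN⟩ := exists_eq_top_of_iSup_eq_top hS.directed_le
    (topologicalClosure_eq_top_iff.1 (h _ (isClosed_topologicalClosure J) hKbot hK))
  exact ⟨N + 1, N.succ_pos, top_le_iff.1 (hN ▸ hS N.le_succ)⟩

end RingEquiv

/-- Let `C` be a unital C*-algebra and `α` a *-automorphism of `C`.  The
following are equivalent:
1. `C` is `α`-simple: the only closed two-sided ideals `I` with `α(I) = I` are `{0}` and `C`;
2. every nonzero closed two-sided ideal `I` with `I ⊆ α(I)` equals `C`;
3. for every nonzero closed two-sided ideal `I` there is `N > 0` with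
   `α⁻¹(I) + α⁻²(I) + ⋯ + α⁻ᴺ(I) = C`. -/
theorem alphaSimple_tfae {C : Type*} [CStarAlgebra C] (α : C ≃⋆ₐ[ℂ] C) :
    List.TFAE
      [ ∀ I : TwoSidedIdeal C, IsClosed (I : Set C) → ⇑α '' (I : Set C) = (I : Set C) →
          I = ⊥ ∨ I = ⊤,
        ∀ I : TwoSidedIdeal C, IsClosed (I : Set C) → I ≠ ⊥ →
          (I : Set C) ⊆ ⇑α '' (I : Set C) → I = ⊤,
        ∀ I : TwoSidedIdeal C, IsClosed (I : Set C) → I ≠ ⊥ →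
          ∃ N : ℕ, 0 < N ∧ ∀ c : C, ∃ f : Fin N → C,
            (∀ k : Fin N, f k ∈ (⇑α.symm)^[k.val + 1] '' (I : Set C)) ∧ ∑ k, f k = c ] := by
  set e : C ≃+* C := α.toRingEquiv
  have he : Continuous e := (StarAlgEquiv.isometry α).continuous
  have he' : Continuous e.symm := (StarAlgEquiv.isometry α.symm).continuous
  have image_eq (I : TwoSidedIdeal C) : e.mapTwoSidedIdeal I = I ↔ ⇑α '' I = I := by
    rw [← SetLike.coe_set_eq, e.coe_mapTwoSidedIdeal]; rfl
  have subset_image (I : TwoSidedIdeal C) : I ≤ e.mapTwoSidedIdeal I ↔ (I : Set C) ⊆ ⇑α '' I := by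
    rw [← SetLike.coe_subset_coe, e.coe_mapTwoSidedIdeal]; rfl
  have sums_eq_top (I : TwoSidedIdeal C) (N : ℕ) :
      ⨆ k : Fin N, (⇑e.symm.mapTwoSidedIdeal)^[k + 1] I = ⊤ ↔
        ∀ c : C, ∃ f : Fin N → C,
          (∀ k : Fin N, f k ∈ (⇑α.symm)^[k.val + 1] '' I) ∧ ∑ k, f k = c := by
    simp only [eq_top_iff, SetLike.le_def, TwoSidedIdeal.mem_iSup_iff_exists_sum,
      TwoSidedIdeal.mem_top, true_imp_iff]
    simp only [← SetLike.mem_coe, e.symm.coe_iterate_mapTwoSidedIdeal]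
    rfl
  tfae_have 1 → 2 := fun h I _ hI hIα => e.eq_top_of_le_mapTwoSidedIdeal he he'
    (fun J hJ hJe => h J hJ ((image_eq J).1 hJe)) hI ((subset_image I).2 hIα)
  tfae_have 2 → 3 := fun h I _ hI => (e.exists_iSup_iterate_symm_eq_top he he'
    (fun J hJ hJ0 hJe => h J hJ hJ0 ((subset_image J).1 hJe)) hI).imp
      fun N hN => hN.imp_right (sums_eq_top I N).1
  tfae_have 3 → 1 := fun h I hIc hIα => e.eq_bot_or_eq_top_of_mapTwoSidedIdeal_eq
    (fun J hJ hJ0 => (h J hJ hJ0).imp fun N hN => hN.imp_right (sums_eq_top J N).2) hIc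
    ((image_eq I).2 hIα)
  tfae_finish
end

section
/- Let A be a C*-algebra and let α be a *-automorphism of A. The following are equivalent: (1) A is α-prime, i.e., any two nonzero closed two-sided ideals I and J of A with α(I) = I and α(J) = J satisfy I ∩ J ≠ {0}; (2) for any pair of nonzero closed two-sided ideals I and J of A there exists n ∈ ℤ such that I ∩ αⁿ(J) ≠ {0}; (3) for any x, y ∈ A \ {0} there exist n ∈ ℤ and z ∈ A such that y z αⁿ(x) ≠ 0. -/
/-- The `n`-th iterate (`n ∈ ℤ`) of a *-automorphism `α`, using inverse iterates for `n < 0`. -/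
def zpowIter {A : Type*} [NonUnitalCStarAlgebra A] (α : A ≃⋆ₐ[ℂ] A) (n : ℤ) : A → A :=
  if 0 ≤ n then (⇑α)^[n.toNat] else (⇑α.symm)^[(-n).toNat]

section aux

variable {A : Type*} [NonUnitalCStarAlgebra A] (α : A ≃⋆ₐ[ℂ] A)

private lemma iter_mul (f : A → A) (hf : ∀ a b, f (a * b) = f a * f b) (k : ℕ) :
    ∀ a b, f^[k] (a * b) = f^[k] a * f^[k] b := by
  induction k with
  | zero => simp
  | succ k ih => intro a b; rw [Function.iterate_succ_apply, hf,
      Function.iterate_succ_apply, Function.iterate_succ_apply, ih]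

private lemma iter_add (f : A → A) (hf : ∀ a b, f (a + b) = f a + f b) (k : ℕ) :
    ∀ a b, f^[k] (a + b) = f^[k] a + f^[k] b := by
  induction k with
  | zero => simp
  | succ k ih => intro a b; rw [Function.iterate_succ_apply, hf,
      Function.iterate_succ_apply, Function.iterate_succ_apply, ih]

lemma zpowIter_mul (n : ℤ) (a b : A) :
    zpowIter α n (a * b) = zpowIter α n a * zpowIter α n b := by
  unfold zpowIter
  split
  · exact iter_mul _ (map_mul α) _ a b
  · exact iter_mul _ (map_mul α.symm) _ a b

lemma zpowIter_add (n : ℤ) (a b : A) :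
    zpowIter α n (a + b) = zpowIter α n a + zpowIter α n b := by
  unfold zpowIter
  split
  · exact iter_add _ (map_add α) _ a b
  · exact iter_add _ (map_add α.symm) _ a b

lemma zpowIter_zero (n : ℤ) : zpowIter α n (0 : A) = 0 := by
  unfold zpowIter
  split
  · exact Function.iterate_fixed (map_zero α) _
  · exact Function.iterate_fixed (map_zero α.symm) _

lemma zpowIter_neg' (n : ℤ) (a : A) : zpowIter α n (-a) = -(zpowIter α n a) := by
  have h := zpowIter_add α n a (-a)
  simp only [add_neg_cancel, zpowIter_zero] at h
  exact (eq_neg_of_add_eq_zero_right h.symm)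

lemma zpowIter_continuous (n : ℤ) : Continuous (zpowIter α n) := by
  unfold zpowIter
  split
  · exact (NonUnitalStarAlgHom.isometry α α.injective).continuous.iterate _
  · exact (NonUnitalStarAlgHom.isometry α.symm α.symm.injective).continuous.iterate _

/-- outside succ: `α (zpowIter α n a) = zpowIter α (n+1) a` -/
lemma zpowIter_succ_out (n : ℤ) (a : A) :
    α (zpowIter α n a) = zpowIter α (n + 1) a := by
  unfold zpowIter
  rcases le_or_gt 0 n with hn | hn
  · rw [if_pos hn, if_pos (by omega)]
    rw [show (n + 1).toNat = n.toNat + 1 by omega, Function.iterate_succ_apply']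
  · rw [if_neg (by omega)]
    rcases eq_or_lt_of_le (show n ≤ -1 by omega) with h | h
    · subst h
      norm_num
    · rw [if_neg (by omega)]
      rw [show (-n).toNat = (-(n+1)).toNat + 1 by omega, Function.iterate_succ_apply']
      exact α.apply_symm_apply _

/-- inside succ: `zpowIter α n (α a) = zpowIter α (n+1) a` -/
lemma zpowIter_succ_in (n : ℤ) (a : A) :
    zpowIter α n (α a) = zpowIter α (n + 1) a := by
  unfold zpowIter
  rcases le_or_gt 0 n with hn | hn
  · rw [if_pos hn, if_pos (by omega),
      show (n + 1).toNat = n.toNat + 1 by omega, Function.iterate_succ_apply]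
  · rw [if_neg (by omega)]
    rcases eq_or_lt_of_le (show n ≤ -1 by omega) with h | h
    · subst h
      norm_num
    · rw [if_neg (by omega),
        show (-n).toNat = (-(n+1)).toNat + 1 by omega, Function.iterate_succ_apply,
        α.symm_apply_apply]

lemma zpowIter_cancel (n : ℤ) (a : A) :
    zpowIter α n (zpowIter α (-n) a) = a := by
  unfold zpowIter
  rcases lt_trichotomy n 0 with hn | hn | hn
  · rw [if_neg (by omega), if_pos (by omega)]
    exact Function.LeftInverse.iterate α.symm_apply_apply _ a
  · subst hn; simp
  · rw [if_pos (by omega), if_neg (by omega), neg_neg]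
    exact Function.LeftInverse.iterate α.apply_symm_apply _ a

lemma zpowIter_zero_apply (a : A) : zpowIter α 0 a = a := by
  unfold zpowIter; simp

lemma cstar_triple_zero {c : A} (h : c * star c * c = 0) : c = 0 := by
  have h2 : (c * star c) * (c * star c) = 0 := by
    rw [← mul_assoc, h, zero_mul]
  have hsa : star (c * star c) = c * star c := by rw [star_mul, star_star]
  have h3 : c * star c = 0 := by
    have : ‖c * star c‖ * ‖c * star c‖ = 0 := by
      rw [← CStarRing.norm_star_mul_self (x := c * star c), hsa, h2, norm_zero]
    exact norm_eq_zero.mp (mul_self_eq_zero.mp this)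
  have : ‖c‖ * ‖c‖ = 0 := by
    rw [← CStarRing.norm_self_mul_star (x := c), h3, norm_zero]
  exact norm_eq_zero.mp (mul_self_eq_zero.mp this)


lemma zpowIter_pred_in (n : ℤ) (a : A) :
    zpowIter α n (α.symm a) = zpowIter α (n - 1) a := by
  have h := zpowIter_succ_in α (n - 1) (α.symm a)
  rw [α.apply_symm_apply, show (n - 1) + 1 = n by ring] at h
  exact h.symm

private lemma iter_image (f : A → A) (S : Set A) (h : f '' S = S) (k : ℕ) :
    f^[k] '' S = S := by
  induction k with
  | zero => simp
  | succ k ih => rw [Function.iterate_succ', Set.image_comp, ih, h]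

lemma zpowIter_image (S : Set A) (h : ⇑α '' S = S) (n : ℤ) :
    zpowIter α n '' S = S := by
  have hsymm : ⇑α.symm '' S = S := by
    conv_lhs => rw [← h, ← Set.image_comp]
    have : (⇑α.symm ∘ ⇑α) = id := by ext a; simp
    rw [this, Set.image_id]
  unfold zpowIter
  split
  · exact iter_image _ S h _
  · exact iter_image _ S hsymm _

lemma twoSidedIdeal_exists_ne_zero (I : TwoSidedIdeal A) (h : I ≠ ⊥) :
    ∃ a ∈ I, a ≠ 0 := by
  by_contra hc
  push_neg at hc
  refine h (SetLike.ext fun a => ?_)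
  rw [TwoSidedIdeal.mem_bot]
  exact ⟨fun ha => hc a ha, fun ha => ha ▸ TwoSidedIdeal.zero_mem _⟩

variable (x : A)

/-- The set of `b` annihilating the orbit of `x` on the right. -/
def annJset : Set A := {b | ∀ (z : A) (n : ℤ), b * z * zpowIter α n x = 0}

/-- The set of `a` whose orbit is annihilated by everything in `annJset`. -/
def annIset : Set A :=
  {a | ∀ b ∈ annJset α x, ∀ (z : A) (n : ℤ), b * z * zpowIter α n a = 0}

/-- `annJset` as a two-sided ideal. -/
def annJ : TwoSidedIdeal A :=
  TwoSidedIdeal.mk' (annJset α x)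
    (fun z n => by rw [zero_mul, zero_mul])
    (fun {a b} ha hb z n => by rw [add_mul, add_mul, ha z n, hb z n, add_zero])
    (fun {a} ha z n => by rw [neg_mul, neg_mul, ha z n, neg_zero])
    (fun {p q} hq z n => by rw [mul_assoc p q z, mul_assoc p, hq, mul_zero])
    (fun {p q} hp z n => by rw [mul_assoc p q z]; exact hp (q * z) n)

/-- `annIset` as a two-sided ideal. -/
def annI : TwoSidedIdeal A :=
  TwoSidedIdeal.mk' (annIset α x)
    (fun b _ z n => by rw [zpowIter_zero, mul_zero])
    (fun {a a'} ha ha' b hb z n => by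
      rw [zpowIter_add, mul_add, ha b hb z n, ha' b hb z n, add_zero])
    (fun {a} ha b hb z n => by rw [zpowIter_neg', mul_neg, ha b hb z n, neg_zero])
    (fun {p q} hq b hb z n => by
      rw [zpowIter_mul, ← mul_assoc, mul_assoc b z]
      exact hq b hb _ n)
    (fun {p q} hp b hb z n => by
      rw [zpowIter_mul, ← mul_assoc, hp b hb z n, zero_mul])

lemma annJ_coe : (annJ α x : Set A) = annJset α x := TwoSidedIdeal.coe_mk' _ _ _ _ _ _
lemma annI_coe : (annI α x : Set A) = annIset α x := TwoSidedIdeal.coe_mk' _ _ _ _ _ _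

lemma annJset_closed : IsClosed (annJset α x) := by
  have : annJset α x =
      ⋂ (z : A), ⋂ (n : ℤ), (fun b => b * z * zpowIter α n x) ⁻¹' {0} := by
    ext b
    simp [annJset, Set.mem_iInter, Set.mem_preimage]
  rw [this]
  exact isClosed_iInter fun z => isClosed_iInter fun n =>
    isClosed_singleton.preimage (by fun_prop)

lemma annIset_closed : IsClosed (annIset α x) := by
  have : annIset α x =
      ⋂ (b ∈ annJset α x), ⋂ (z : A), ⋂ (n : ℤ),
        (fun a => b * z * zpowIter α n a) ⁻¹' {0} := by
    ext a
    simp [annIset, Set.mem_iInter, Set.mem_preimage]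
  rw [this]
  exact isClosed_biInter fun b hb => isClosed_iInter fun z => isClosed_iInter fun n =>
    isClosed_singleton.preimage (continuous_const.mul (zpowIter_continuous α n))

lemma annJset_inv : ⇑α '' annJset α x = annJset α x := by
  apply Set.Subset.antisymm
  · rintro _ ⟨b, hb, rfl⟩ z n
    have key : α b * z * zpowIter α n x = α (b * α.symm z * zpowIter α (n - 1) x) := by
      rw [map_mul, map_mul, α.apply_symm_apply, zpowIter_succ_out,
        show (n - 1) + 1 = n by ring]
    rw [key, hb (α.symm z) (n - 1), map_zero]
  · intro b hb
    refine ⟨α.symm b, fun z n => ?_, α.apply_symm_apply b⟩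
    have key : α.symm b * z * zpowIter α n x = α.symm (b * α z * zpowIter α (n + 1) x) := by
      rw [map_mul, map_mul, α.symm_apply_apply, ← zpowIter_succ_out, α.symm_apply_apply]
    rw [key, hb (α z) (n + 1), map_zero]

lemma annIset_inv : ⇑α '' annIset α x = annIset α x := by
  apply Set.Subset.antisymm
  · rintro _ ⟨a, ha, rfl⟩ b hb z n
    rw [zpowIter_succ_in]
    exact ha b hb z (n + 1)
  · intro a ha
    refine ⟨α.symm a, fun b hb z n => ?_, α.apply_symm_apply a⟩
    rw [zpowIter_pred_in]
    exact ha b hb z (n - 1)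

end aux

/-- Let `A` be a C*-algebra and `α` a *-automorphism of `A`.  The following are
equivalent:
1. `A` is `α`-prime: any two nonzero closed two-sided `α`-invariant ideals have nonzero
   intersection;
2. for any pair of nonzero closed two-sided ideals `I`, `J` there is `n ∈ ℤ` with
   `I ∩ αⁿ(J) ≠ {0}`;
3. for any nonzero `x, y ∈ A` there are `n ∈ ℤ` and `z ∈ A` with `y z αⁿ(x) ≠ 0`. -/
theorem alphaPrime_tfae {A : Type*} [NonUnitalCStarAlgebra A] (α : A ≃⋆ₐ[ℂ] A) :
    List.TFAE
      [ ∀ I J : TwoSidedIdeal A, IsClosed (I : Set A) → IsClosed (J : Set A) →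
          I ≠ ⊥ → J ≠ ⊥ → ⇑α '' (I : Set A) = (I : Set A) → ⇑α '' (J : Set A) = (J : Set A) →
          I ⊓ J ≠ ⊥,
        ∀ I J : TwoSidedIdeal A, IsClosed (I : Set A) → IsClosed (J : Set A) →
          I ≠ ⊥ → J ≠ ⊥ →
          ∃ n : ℤ, ∃ a : A, a ≠ 0 ∧ a ∈ I ∧ a ∈ zpowIter α n '' (J : Set A),
        ∀ x y : A, x ≠ 0 → y ≠ 0 → ∃ n : ℤ, ∃ z : A, y * z * zpowIter α n x ≠ 0 ] := by
  tfae_have 1 → 3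
  | h1, x, y, hx, hy => by
    by_contra hcon
    push_neg at hcon
    -- `hcon : ∀ n z, y * z * zpowIter α n x = 0`
    have hyJ : y ∈ annJset α x := fun z n => hcon n z
    have hxI : x ∈ annIset α x := fun b hb z n => hb z n
    have hJne : annJ α x ≠ ⊥ := by
      intro hbot
      have : y ∈ annJ α x := by rw [← SetLike.mem_coe, annJ_coe]; exact hyJ
      rw [hbot, TwoSidedIdeal.mem_bot] at this
      exact hy this
    have hIne : annI α x ≠ ⊥ := by
      intro hbot
      have : x ∈ annI α x := by rw [← SetLike.mem_coe, annI_coe]; exact hxI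
      rw [hbot, TwoSidedIdeal.mem_bot] at this
      exact hx this
    have hbot : annI α x ⊓ annJ α x = ⊥ := by
      refine SetLike.ext fun c => ?_
      rw [TwoSidedIdeal.mem_inf, TwoSidedIdeal.mem_bot]
      constructor
      · rintro ⟨hcI, hcJ⟩
        rw [← SetLike.mem_coe, annI_coe] at hcI
        rw [← SetLike.mem_coe, annJ_coe] at hcJ
        have := hcI c hcJ (star c) 0
        rw [zpowIter_zero_apply] at this
        exact cstar_triple_zero this
      · rintro rfl
        exact ⟨TwoSidedIdeal.zero_mem _, TwoSidedIdeal.zero_mem _⟩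
    refine h1 (annI α x) (annJ α x) ?_ ?_ hIne hJne ?_ ?_ hbot
    · rw [annI_coe]; exact annIset_closed α x
    · rw [annJ_coe]; exact annJset_closed α x
    · rw [annI_coe]; exact annIset_inv α x
    · rw [annJ_coe]; exact annJset_inv α x
  tfae_have 3 → 2
  | h3, I, J, hIc, hJc, hIne, hJne => by
    obtain ⟨x, hxJ, hx⟩ := twoSidedIdeal_exists_ne_zero J hJne
    obtain ⟨y, hyI, hy⟩ := twoSidedIdeal_exists_ne_zero I hIne
    obtain ⟨n, z, hnz⟩ := h3 x y hx hy
    refine ⟨n, y * z * zpowIter α n x, hnz, ?_, ?_⟩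
    · exact TwoSidedIdeal.mul_mem_right _ _ _ (TwoSidedIdeal.mul_mem_right _ _ _ hyI)
    · refine ⟨zpowIter α (-n) (y * z) * x, ?_, ?_⟩
      · exact TwoSidedIdeal.mul_mem_left _ _ _ hxJ
      · rw [zpowIter_mul, zpowIter_cancel]
  tfae_have 2 → 1
  | h2, I, J, hIc, hJc, hIne, hJne, hIinv, hJinv => by
    intro hbot
    obtain ⟨n, a, ha0, haI, haJim⟩ := h2 I J hIc hJc hIne hJne
    rw [zpowIter_image α (J : Set A) hJinv n, SetLike.mem_coe] at haJim
    have : a ∈ I ⊓ J := by rw [TwoSidedIdeal.mem_inf]; exact ⟨haI, haJim⟩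
    rw [hbot, TwoSidedIdeal.mem_bot] at this
    exact ha0 this
  tfae_finish
end

section
/- Let X be a compact Hausdorff space, let A be a unital C*-algebra, and let η : C(X, ℂ) → A be a unital *-homomorphism whose range lies in the center of A. For x ∈ X let I_x denote the smallest closed two-sided ideal of A containing {η(f) : f ∈ C(X, ℂ), f(x) = 0}. Assume: (i) for every a ∈ A the function x ↦ dist(a, I_x) is continuous on X; (ii) I_x ≠ A for every x ∈ X; (iii) for every x ∈ X the only closed two-sided ideals of A containing I_x are I_x and A. Let h : X → X be a minimal homeomorphism and let α be a *-automorphism of A such that α(η(f)) = η(f ∘ h⁻¹) for all f ∈ C(X, ℂ). Then the only closed two-sided ideals B of A with α(B) = B are {0} and A. -/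
/-!
The set `Y` of points whose fibre ideal contains `B` is closed, by continuity of
`x ↦ dist(a, I x)`, and `h`-invariant, since `α` maps `I x` onto `I (h x)`; by minimality it is
empty or all of `X`. Both cases rest on a local-to-global principle: if, near every point, `a`
is arbitrarily close to `B` modulo the fibre ideal, then `a ∈ B`. Closeness near `x` is measured
in order form, `(a - b)* η(g) (a - b) ≤ δ η(g)` for `g ≥ 0` supported near `x`, which passes to
`B + I x` and its closure because `η` is central. A partition of unity `∑ gⱼ = 1` then glues the
local approximants `bⱼ`, via `(∑ qⱼ cⱼ)* (∑ qⱼ cⱼ) ≤ ∑ cⱼ* qⱼ cⱼ` for `qⱼ = η(gⱼ)`. If `Y = X`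
then `B ⊆ ⋂ I x = 0`; if `Y = ∅` then `B + I x` is dense for every `x` by simplicity of the
fibres, so `1 ∈ B`.
-/

open Filter Function Set Topology
open scoped ComplexOrder

section StarOrderedRing

variable {R : Type*} [Ring R] [StarRing R] [PartialOrder R] [StarOrderedRing R]

lemma star_add_mul_add_le_two_nsmul {p : R} (hp : 0 ≤ p) (c d : R) :
    star (c + d) * p * (c + d) ≤ 2 • (star c * p * c + star d * p * d) := by
  rw [← sub_nonneg]
  convert star_left_conjugate_nonneg hp (c - d) using 1
  simp only [star_add, star_sub, two_nsmul]
  noncomm_ring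

lemma star_sum_mul_sum_le {ι : Type*} (s : Finset ι) (q c : ι → R) (hq : ∀ i ∈ s, 0 ≤ q i)
    (hs : ∑ i ∈ s, q i = 1) :
    star (∑ i ∈ s, q i * c i) * ∑ i ∈ s, q i * c i ≤ ∑ i ∈ s, star (c i) * q i * c i := by
  obtain ⟨m, hm⟩ : ∃ m, ∑ i ∈ s, q i * c i = m := ⟨_, rfl⟩
  have hstar : ∑ i ∈ s, star (c i) * q i = star m := by
    rw [← hm, star_sum]
    refine Finset.sum_congr rfl fun i hi => ?_
    rw [star_mul, (IsSelfAdjoint.of_nonneg (hq i hi)).star_eq]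
  have hdefect : ∑ i ∈ s, star (c i - m) * q i * (c i - m) =
      ∑ i ∈ s, star (c i) * q i * c i - star m * m := by
    have hexpand : ∀ i, star (c i - m) * q i * (c i - m) = star (c i) * q i * c i
        - star (c i) * q i * m - star m * (q i * c i) + star m * q i * m := fun i => by
      simp only [star_sub]; noncomm_ring
    simp only [hexpand, Finset.sum_add_distrib, Finset.sum_sub_distrib, ← Finset.sum_mul,
      ← Finset.mul_sum, hstar, hm, hs]
    noncomm_ring
  rw [hm, ← sub_nonneg, ← hdefect]
  exact Finset.sum_nonneg fun i hi => star_left_conjugate_nonneg (hq i hi) _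

end StarOrderedRing

section CStarAlgebra

variable {A : Type*} [CStarAlgebra A] [PartialOrder A] [StarOrderedRing A]

lemma norm_sq_le_of_star_mul_self_le {a : A} {r : ℝ} (hr : 0 ≤ r)
    (h : star a * a ≤ algebraMap ℝ A r) : ‖a‖ ^ 2 ≤ r := by
  rw [sq, ← CStarRing.norm_star_mul_self]
  exact (CStarAlgebra.norm_le_iff_le_algebraMap _ hr (star_mul_self_nonneg a)).2 h

lemma star_mul_star_mul_self_mul_le {r d : A} (h : Commute r d) :
    star d * (star r * r) * d ≤ ‖d‖ ^ 2 • (star r * r) := by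
  have hconj : star d * (star r * r) * d = star r * (star d * d) * r := by
    calc star d * (star r * r) * d = (star d * star r) * (r * d) := by noncomm_ring
      _ = (star r * star d) * (d * r) := by rw [h.star_star.eq.symm, h.eq]
      _ = star r * (star d * d) * r := by noncomm_ring
  rw [hconj]
  calc star r * (star d * d) * r ≤ star r * algebraMap ℝ A (‖d‖ ^ 2) * r :=
        star_left_conjugate_le_conjugate CStarAlgebra.star_mul_le_algebraMap_norm_sq r
    _ = ‖d‖ ^ 2 • (star r * r) := by
        rw [Algebra.algebraMap_eq_smul_one, mul_smul_comm, mul_one, smul_mul_assoc]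

end CStarAlgebra

lemma exists_finset_sum_eq_one_support_subset {X : Type*} [TopologicalSpace X] [CompactSpace X]
    [T2Space X] (U : X → Set X) (hU : ∀ x, U x ∈ 𝓝 x) :
    ∃ (t : Finset X) (g : X → C(X, ℂ)),
      (∀ x, 0 ≤ g x) ∧ (∀ x, support (g x) ⊆ U x) ∧ ∑ x ∈ t, g x = 1 := by
  obtain ⟨t, ht⟩ := isCompact_univ.elim_finite_subcover (fun x => interior (U x))
    (fun _ => isOpen_interior) fun x _ => mem_iUnion.2 ⟨x, mem_interior_iff_mem_nhds.2 (hU x)⟩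
  -- indexing the partition of unity by all of `X`, with empty sets off `t`, avoids subtypes
  obtain ⟨f, hf⟩ := PartitionOfUnity.exists_isSubordinate isClosed_univ
    (fun x => ⋃ _ : x ∈ t, interior (U x)) (fun _ => isOpen_iUnion fun _ => isOpen_interior) ht
  have hft : ∀ x y, f x y ≠ 0 → x ∈ t ∧ y ∈ U x := fun x y hxy => by
    obtain ⟨hx, hy⟩ := mem_iUnion.1 (hf x (subset_tsupport _ hxy))
    exact ⟨hx, interior_subset hy⟩
  refine ⟨t, fun x => (⟨((↑) : ℝ → ℂ), Complex.continuous_ofReal⟩ : C(ℝ, ℂ)).comp (f x),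
    fun x => ContinuousMap.le_def.2 fun y => ?_, fun x y hy => (hft x y ?_).2, ?_⟩
  · simpa using f.nonneg x y
  · simpa using hy
  · ext y
    have hsum := f.sum_eq_one (mem_univ y)
    rw [finsum_eq_sum_of_support_subset _ fun x hx => (hft x y hx).1] at hsum
    simp [← Complex.ofReal_sum, hsum]

section CXAlgebra

variable {X : Type*} [TopologicalSpace X] {A : Type*} [CStarAlgebra A] [PartialOrder A]
  (η : C(X, ℂ) →⋆ₐ[ℂ] A)

/-- An order-theoretic form of "the image of `c` in the fibres near `x` has norm at most `√δ`". -/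
def IsSmallNear (x : X) (c : A) (δ : ℝ) : Prop :=
  ∃ U ∈ 𝓝 x, ∀ g : C(X, ℂ), 0 ≤ g → support g ⊆ U → star c * η g * c ≤ δ • η g

variable {η}

lemma IsSmallNear.neg {x : X} {c : A} {δ : ℝ} (h : IsSmallNear η x c δ) :
    IsSmallNear η x (-c) δ := by
  simpa [IsSmallNear] using h

variable [StarOrderedRing A]

lemma star_mul_map_mul_le [CompactSpace X] (hcentral : ∀ (f : C(X, ℂ)) (a : A), η f * a = a * η f)
    {g : C(X, ℂ)} (hg : 0 ≤ g) (d : A) : star d * η g * d ≤ ‖d‖ ^ 2 • η g := by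
  obtain ⟨r, rfl⟩ := CStarAlgebra.nonneg_iff_eq_star_mul_self.1 hg
  rw [map_mul, map_star]
  exact star_mul_star_mul_self_mul_le (hcentral r d)

namespace IsSmallNear

variable {x : X} {c : A} {δ : ℝ}

lemma mono (h : IsSmallNear η x c δ) {δ' : ℝ} (hδ : δ ≤ δ') : IsSmallNear η x c δ' := by
  obtain ⟨U, hU, hc⟩ := h
  exact ⟨U, hU, fun g hg hgU => (hc g hg hgU).trans
    (smul_le_smul_of_nonneg_right hδ (map_nonneg η hg))⟩

lemma add {d : A} {δ' : ℝ} (hc : IsSmallNear η x c δ) (hd : IsSmallNear η x d δ') :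
    IsSmallNear η x (c + d) (2 * (δ + δ')) := by
  obtain ⟨U, hU, hc⟩ := hc
  obtain ⟨V, hV, hd⟩ := hd
  refine ⟨U ∩ V, inter_mem hU hV, fun g hg hgUV => ?_⟩
  calc star (c + d) * η g * (c + d) ≤ 2 • (star c * η g * c + star d * η g * d) :=
        star_add_mul_add_le_two_nsmul (map_nonneg η hg) c d
    _ ≤ 2 • (δ • η g + δ' • η g) :=
        nsmul_le_nsmul_right (add_le_add (hc g hg (hgUV.trans inter_subset_left))
          (hd g hg (hgUV.trans inter_subset_right))) 2
    _ = (2 * (δ + δ')) • η g := by rw [← add_smul, two_nsmul, mul_smul, two_smul]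

variable [CompactSpace X] (hcentral : ∀ (f : C(X, ℂ)) (a : A), η f * a = a * η f)
include hcentral

lemma mul_left (h : IsSmallNear η x c δ) (d : A) : IsSmallNear η x (d * c) (‖d‖ ^ 2 * δ) := by
  obtain ⟨U, hU, hc⟩ := h
  refine ⟨U, hU, fun g hg hgU => ?_⟩
  calc star (d * c) * η g * (d * c) = star c * (star d * η g * d) * c := by
        rw [star_mul]; noncomm_ring
    _ ≤ star c * (‖d‖ ^ 2 • η g) * c :=
        star_left_conjugate_le_conjugate (star_mul_map_mul_le hcentral hg d) c
    _ ≤ ‖d‖ ^ 2 • (δ • η g) := by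
        rw [mul_smul_comm, smul_mul_assoc]
        exact smul_le_smul_of_nonneg_left (hc g hg hgU) (by positivity)
    _ = (‖d‖ ^ 2 * δ) • η g := (mul_smul _ _ _).symm

lemma mul_right (h : IsSmallNear η x c δ) (hδ : 0 ≤ δ) (d : A) :
    IsSmallNear η x (c * d) (δ * ‖d‖ ^ 2) := by
  obtain ⟨U, hU, hc⟩ := h
  refine ⟨U, hU, fun g hg hgU => ?_⟩
  calc star (c * d) * η g * (c * d) = star d * (star c * η g * c) * d := by
        rw [star_mul]; noncomm_ring
    _ ≤ star d * (δ • η g) * d := star_left_conjugate_le_conjugate (hc g hg hgU) d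
    _ ≤ δ • (‖d‖ ^ 2 • η g) := by
        rw [mul_smul_comm, smul_mul_assoc]
        exact smul_le_smul_of_nonneg_left (star_mul_map_mul_le hcentral hg d) hδ
    _ = (δ * ‖d‖ ^ 2) • η g := (mul_smul _ _ _).symm

end IsSmallNear

lemma isSmallNear_of_norm_sq_le [CompactSpace X]
    (hcentral : ∀ (f : C(X, ℂ)) (a : A), η f * a = a * η f) {x : X} {c : A} {δ : ℝ}
    (h : ‖c‖ ^ 2 ≤ δ) : IsSmallNear η x c δ :=
  ⟨univ, univ_mem, fun _ hg _ => (star_mul_map_mul_le hcentral hg c).trans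
    (smul_le_smul_of_nonneg_right h (map_nonneg η hg))⟩

lemma isSmallNear_map {x : X} {f : C(X, ℂ)} (hf : f x = 0) {δ : ℝ} (hδ : 0 < δ) :
    IsSmallNear η x (η f) δ := by
  refine ⟨{y | ‖f y‖ ^ 2 < δ}, (isOpen_lt (by fun_prop) continuous_const).mem_nhds (by simpa [hf]),
    fun g hg hgU => ?_⟩
  rw [← map_star, ← map_mul, ← map_mul, ← Complex.coe_smul, ← map_smul]
  refine OrderHomClass.mono η (ContinuousMap.le_def.2 fun y => ?_)
  by_cases hy : g y = 0
  · simp [hy]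
  · have hgy : 0 ≤ g y := ContinuousMap.le_def.1 hg y
    simp only [ContinuousMap.mul_apply, ContinuousMap.star_apply, ContinuousMap.smul_apply]
    rw [mul_right_comm, Complex.star_def, Complex.conj_mul', smul_eq_mul]
    exact mul_le_mul_of_nonneg_right (by exact_mod_cast (hgU hy).le) hgy

variable [CompactSpace X] (η) (hcentral : ∀ (f : C(X, ℂ)) (a : A), η f * a = a * η f)

/-- Takes the place of the closure of `B + I x`, which it contains. -/
def localIdeal (B : TwoSidedIdeal A) (x : X) : TwoSidedIdeal A :=
  .mk' {a | ∀ δ > 0, ∃ b ∈ B, IsSmallNear η x (a - b) δ}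
    (fun δ hδ => ⟨0, B.zero_mem, isSmallNear_of_norm_sq_le hcentral (by simpa using hδ.le)⟩)
    (fun {a a'} ha ha' δ hδ => by
      obtain ⟨b, hb, hab⟩ := ha (δ / 4) (by positivity)
      obtain ⟨b', hb', hab'⟩ := ha' (δ / 4) (by positivity)
      refine ⟨b + b', B.add_mem hb hb', ?_⟩
      rw [show a + a' - (b + b') = (a - b) + (a' - b') by abel]
      exact (hab.add hab').mono (by linarith))
    (fun {a} ha δ hδ => by
      obtain ⟨b, hb, hab⟩ := ha δ hδ
      refine ⟨-b, B.neg_mem hb, ?_⟩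
      rw [show -a - -b = -(a - b) by abel]
      exact hab.neg)
    (fun {d a} ha δ hδ => by
      obtain ⟨b, hb, hab⟩ := ha (δ / (‖d‖ ^ 2 + 1)) (by positivity)
      refine ⟨d * b, B.mul_mem_left _ _ hb, ?_⟩
      rw [← mul_sub]
      refine (hab.mul_left hcentral d).mono ?_
      rw [← mul_div_assoc, div_le_iff₀ (by positivity)]
      nlinarith)
    (fun {a d} ha δ hδ => by
      obtain ⟨b, hb, hab⟩ := ha (δ / (‖d‖ ^ 2 + 1)) (by positivity)
      refine ⟨b * d, B.mul_mem_right _ _ hb, ?_⟩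
      rw [← sub_mul]
      refine (hab.mul_right hcentral (by positivity) d).mono ?_
      rw [div_mul_eq_mul_div, div_le_iff₀ (by positivity)]
      nlinarith)

variable {η}

lemma mem_localIdeal {B : TwoSidedIdeal A} {x : X} {a : A} :
    a ∈ localIdeal η hcentral B x ↔ ∀ δ > 0, ∃ b ∈ B, IsSmallNear η x (a - b) δ :=
  TwoSidedIdeal.mem_mk' ..

lemma le_localIdeal (B : TwoSidedIdeal A) (x : X) : B ≤ localIdeal η hcentral B x :=
  fun a ha => (mem_localIdeal hcentral).2 fun δ hδ =>
    ⟨a, ha, isSmallNear_of_norm_sq_le hcentral (by simpa using hδ.le)⟩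

lemma map_mem_localIdeal (B : TwoSidedIdeal A) {x : X} {f : C(X, ℂ)} (hf : f x = 0) :
    η f ∈ localIdeal η hcentral B x :=
  (mem_localIdeal hcentral).2 fun δ hδ => ⟨0, B.zero_mem, by simpa using isSmallNear_map hf hδ⟩

lemma isClosed_localIdeal (B : TwoSidedIdeal A) (x : X) :
    IsClosed (localIdeal η hcentral B x : Set A) := by
  refine isClosed_of_closure_subset fun a ha => (mem_localIdeal hcentral).2 fun δ hδ => ?_
  obtain ⟨a', ha', hdist⟩ := Metric.mem_closure_iff.1 ha (√(δ / 4)) (by positivity)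
  obtain ⟨b, hb, hab⟩ := (mem_localIdeal hcentral).1 ha' (δ / 4) (by positivity)
  have hnear : IsSmallNear η x (a - a') (δ / 4) := isSmallNear_of_norm_sq_le hcentral
    ((Real.lt_sqrt (norm_nonneg _)).1 (by rwa [← dist_eq_norm])).le
  refine ⟨b, hb, ?_⟩
  rw [show a - b = (a - a') + (a' - b) by abel]
  exact (hnear.add hab).mono (by linarith)

lemma mem_of_forall_mem_localIdeal [T2Space X] {B : TwoSidedIdeal A} (hB : IsClosed (B : Set A))
    {a : A} (ha : ∀ x, a ∈ localIdeal η hcentral B x) : a ∈ B := by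
  rw [← SetLike.mem_coe, ← hB.closure_eq, Metric.mem_closure_iff]
  intro ε hε
  choose b hbB U hU hsmall using fun x => (mem_localIdeal hcentral).1 (ha x) (ε ^ 2 / 2)
    (by positivity)
  obtain ⟨t, g, hg0, hgU, hg1⟩ := exists_finset_sum_eq_one_support_subset U hU
  have hη1 : ∑ x ∈ t, η (g x) = 1 := by rw [← map_sum, hg1, map_one]
  refine ⟨∑ x ∈ t, η (g x) * b x, sum_mem fun x _ => B.mul_mem_left _ _ (hbB x), ?_⟩
  have hdiff : a - ∑ x ∈ t, η (g x) * b x = ∑ x ∈ t, η (g x) * (a - b x) := by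
    rw [Finset.sum_congr rfl fun x _ => mul_sub (η (g x)) a (b x), Finset.sum_sub_distrib,
      ← Finset.sum_mul, hη1, one_mul]
  have hsq : star (a - ∑ x ∈ t, η (g x) * b x) * (a - ∑ x ∈ t, η (g x) * b x) ≤
      algebraMap ℝ A (ε ^ 2 / 2) :=
    calc _ ≤ ∑ x ∈ t, star (a - b x) * η (g x) * (a - b x) := by
          rw [hdiff]
          exact star_sum_mul_sum_le t _ _ (fun x _ => map_nonneg η (hg0 x)) hη1
      _ ≤ ∑ x ∈ t, (ε ^ 2 / 2) • η (g x) :=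
          Finset.sum_le_sum fun x _ => hsmall x (g x) (hg0 x) (hgU x)
      _ = algebraMap ℝ A (ε ^ 2 / 2) := by
          rw [← Finset.smul_sum, hη1, Algebra.algebraMap_eq_smul_one]
  have hnorm := norm_sq_le_of_star_mul_self_le (by positivity) hsq
  rw [dist_eq_norm]
  nlinarith [norm_nonneg (a - ∑ x ∈ t, η (g x) * b x)]

end CXAlgebra

section Fibres

variable {X : Type*} [TopologicalSpace X] {A : Type*} [CStarAlgebra A] {η : C(X, ℂ) →⋆ₐ[ℂ] A}
  {I : X → TwoSidedIdeal A}

lemma isClosed_setOf_subset_fiber (hIclosed : ∀ x, IsClosed (I x : Set A))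
    (hcont : ∀ a : A, Continuous fun x => Metric.infDist a (I x : Set A)) (S : Set A) :
    IsClosed {x | S ⊆ I x} := by
  have hY : {x | S ⊆ I x} = ⋂ a ∈ S, {x | Metric.infDist a (I x : Set A) = 0} := by
    ext x
    simp only [mem_iInter]
    exact forall₂_congr fun a _ => (hIclosed x).mem_iff_infDist_zero ⟨0, (I x).zero_mem⟩
  rw [hY]
  exact isClosed_biInter fun a _ => isClosed_eq (hcont a) continuous_const

variable (hIclosed : ∀ x, IsClosed (I x : Set A))
  (hIcontains : ∀ x, ∀ f : C(X, ℂ), f x = 0 → η f ∈ I x)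
  (hIsmallest : ∀ x, ∀ K : TwoSidedIdeal A, IsClosed (K : Set A) →
    (∀ f : C(X, ℂ), f x = 0 → η f ∈ K) → I x ≤ K)
include hIclosed hIcontains hIsmallest

lemma image_fiber_subset (φ : A ≃⋆ₐ[ℂ] A) (k : C(X, X)) (hφ : ∀ f, φ (η f) = η (f.comp k))
    (y : X) : φ '' I (k y) ⊆ I y := by
  have hclosed : IsClosed ((I y).comap φ : Set A) := by
    convert (hIclosed y).preimage (StarAlgEquiv.isometry φ).continuous using 1
    ext; exact TwoSidedIdeal.mem_comap φ
  have hle : I (k y) ≤ (I y).comap φ := hIsmallest (k y) _ hclosed fun f hf =>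
    (TwoSidedIdeal.mem_comap φ).2 (hφ f ▸ hIcontains y _ (by simpa using hf))
  rintro _ ⟨a, ha, rfl⟩
  exact (TwoSidedIdeal.mem_comap φ).1 (hle ha)

lemma image_fiber_eq (h : X ≃ₜ X) (α : A ≃⋆ₐ[ℂ] A)
    (hover : ∀ f : C(X, ℂ), α (η f) = η (f.comp (h.symm : C(X, X)))) (x : X) :
    α '' I x = I (h x) := by
  have hback : ∀ f : C(X, ℂ), α.symm (η f) = η (f.comp (h : C(X, X))) := fun f =>
    α.symm_apply_eq.2 (by rw [hover]; congr 1; ext; simp)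
  refine subset_antisymm ?_ ?_
  · simpa using image_fiber_subset hIclosed hIcontains hIsmallest α _ hover (h x)
  · calc (I (h x) : Set A) = α '' (α.symm '' I (h x)) := by simp [image_image]
      _ ⊆ α '' I x :=
        image_mono (image_fiber_subset hIclosed hIcontains hIsmallest α.symm _ hback x)

lemma image_setOf_subset_fiber (h : X ≃ₜ X) (α : A ≃⋆ₐ[ℂ] A)
    (hover : ∀ f : C(X, ℂ), α (η f) = η (f.comp (h.symm : C(X, X)))) {S : Set A}
    (hS : α '' S = S) : h '' {x | S ⊆ I x} = {x | S ⊆ I x} := by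
  have hmem : ∀ x, S ⊆ I x ↔ S ⊆ I (h x) := fun x => by
    rw [← image_fiber_eq hIclosed hIcontains hIsmallest h α hover,
      ← image_subset_image_iff (EquivLike.injective α), hS]
  ext y
  simp [h.image_eq_preimage_symm, hmem (h.symm y)]

end Fibres

theorem alphaSimple_of_continuous_simple_fibers_general
    {X : Type*} [TopologicalSpace X] [CompactSpace X] [T2Space X]
    {A : Type*} [CStarAlgebra A]
    (η : C(X, ℂ) →⋆ₐ[ℂ] A) (hcentral : ∀ (f : C(X, ℂ)) (a : A), η f * a = a * η f)
    (I : X → TwoSidedIdeal A)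
    (hIclosed : ∀ x, IsClosed (I x : Set A))
    (hIcontains : ∀ x, ∀ f : C(X, ℂ), f x = 0 → η f ∈ I x)
    (hIsmallest : ∀ x, ∀ K : TwoSidedIdeal A, IsClosed (K : Set A) →
      (∀ f : C(X, ℂ), f x = 0 → η f ∈ K) → I x ≤ K)
    (hcont : ∀ a : A, Continuous fun x => Metric.infDist a (I x : Set A))
    (hsimple : ∀ x, ∀ K : TwoSidedIdeal A, IsClosed (K : Set A) → I x ≤ K → K = I x ∨ K = ⊤)
    (h : X ≃ₜ X) (hmin : ∀ Y : Set X, IsClosed Y → ⇑h '' Y = Y → Y = ∅ ∨ Y = Set.univ)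
    (α : A ≃⋆ₐ[ℂ] A)
    (hover : ∀ f : C(X, ℂ), α (η f) = η (f.comp (h.symm : C(X, X)))) :
    ∀ B : TwoSidedIdeal A, IsClosed (B : Set A) → ⇑α '' (B : Set A) = (B : Set A) →
      B = ⊥ ∨ B = ⊤ := by
  intro B hB hαB
  let : PartialOrder A := CStarAlgebra.spectralOrder A
  let : StarOrderedRing A := CStarAlgebra.spectralOrderedRing A
  have hI : ∀ B x, I x ≤ localIdeal η hcentral B x := fun B x =>
    hIsmallest x _ (isClosed_localIdeal hcentral B x) fun _ hf => map_mem_localIdeal hcentral B hf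
  rcases hmin _ (isClosed_setOf_subset_fiber hIclosed hcont B)
    (image_setOf_subset_fiber hIclosed hIcontains hIsmallest h α hover hαB) with hY | hY
  · refine .inr (B.eq_top (mem_of_forall_mem_localIdeal hcentral hB fun x => ?_))
    have hBx : ¬ (B : Set A) ⊆ I x := fun hx => (eq_empty_iff_forall_notMem.1 hY x) hx
    rcases hsimple x _ (isClosed_localIdeal hcentral B x) (hI B x) with hx | hx
    · exact absurd ((le_localIdeal hcentral B x).trans hx.le) hBx
    · exact hx ▸ trivial
  · refine .inl (eq_bot_iff.2 fun b hb => mem_of_forall_mem_localIdeal hcentral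
      (by simp [TwoSidedIdeal.coe_bot]) fun x => hI ⊥ x ((eq_univ_iff_forall.1 hY x) hb))

/-- Let `X` be a compact Hausdorff space, `A` a unital C*-algebra, and
`η : C(X, ℂ) → A` a unital *-homomorphism with central range.  For `x ∈ X` let `I x` be the
smallest closed two-sided ideal of `A` containing `{η f : f x = 0}`.  Assume that `A` is a
continuous `C(X)`-algebra (i.e. `x ↦ dist(a, I x)` is continuous for all `a`), that all fibers
are nonzero (`I x ≠ A`), and that all fibers are simple (the only closed two-sided ideals
containing `I x` are `I x` and `A`).  If `h : X → X` is a minimal homeomorphism and `α` is a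
*-automorphism of `A` lying over `h`, then the only closed two-sided ideals `B` of `A` with
`α(B) = B` are `{0}` and `A`. -/
theorem alphaSimple_of_continuous_simple_fibers
    {X : Type*} [TopologicalSpace X] [CompactSpace X] [T2Space X]
    {A : Type*} [CStarAlgebra A]
    (η : C(X, ℂ) →⋆ₐ[ℂ] A) (hcentral : ∀ (f : C(X, ℂ)) (a : A), η f * a = a * η f)
    (I : X → TwoSidedIdeal A)
    (hIclosed : ∀ x, IsClosed (I x : Set A))
    (hIcontains : ∀ x, ∀ f : C(X, ℂ), f x = 0 → η f ∈ I x)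
    (hIsmallest : ∀ x, ∀ K : TwoSidedIdeal A, IsClosed (K : Set A) →
      (∀ f : C(X, ℂ), f x = 0 → η f ∈ K) → I x ≤ K)
    (hcont : ∀ a : A, Continuous fun x => Metric.infDist a (I x : Set A))
    (hproper : ∀ x, I x ≠ ⊤)
    (hsimple : ∀ x, ∀ K : TwoSidedIdeal A, IsClosed (K : Set A) → I x ≤ K → K = I x ∨ K = ⊤)
    (h : X ≃ₜ X) (hmin : ∀ Y : Set X, IsClosed Y → ⇑h '' Y = Y → Y = ∅ ∨ Y = Set.univ)
    (α : A ≃⋆ₐ[ℂ] A)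
    (hover : ∀ f : C(X, ℂ), α (η f) = η (f.comp (h.symm : C(X, X)))) :
    ∀ B : TwoSidedIdeal A, IsClosed (B : Set A) → ⇑α '' (B : Set A) = (B : Set A) →
      B = ⊥ ∨ B = ⊤ :=
  alphaSimple_of_continuous_simple_fibers_general η hcentral I hIclosed hIcontains hIsmallest hcont
    hsimple h hmin α hover
end

section
/- Let D be a simple unital C*-algebra. If S₁ and S₂ are pseudoperiodic subsets of Aut(D), then both the set of compositions S₁S₂ = {γ₁ ∘ γ₂ : γ₁ ∈ S₁, γ₂ ∈ S₂} and the union S₁ ∪ S₂ are pseudoperiodic. -/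
/-- Cuntz subequivalence: `a ≾_D b` iff there is a sequence `(vₙ)` in `D` with
`‖vₙ b vₙ* − a‖ → 0`. -/
def CuntzSubequiv {D : Type*} [CStarAlgebra D] (a b : D) : Prop :=
  ∃ v : ℕ → D,
    Filter.Tendsto (fun n => ‖v n * b * star (v n) - a‖) Filter.atTop (nhds 0)

/-- A set `S` of *-automorphisms of `D` is pseudoperiodic if for every nonzero positive `a ∈ D`
there is a nonzero positive `b ∈ D` with `b ≾_D γ(a)` for every `γ ∈ S ∪ {id}`. -/
def Pseudoperiodic {D : Type*} [CStarAlgebra D] [PartialOrder D] [StarOrderedRing D]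
    (S : Set (D ≃⋆ₐ[ℂ] D)) : Prop :=
  ∀ a : D, 0 ≤ a → a ≠ 0 → ∃ b : D, 0 ≤ b ∧ b ≠ 0 ∧
    CuntzSubequiv b a ∧ ∀ γ ∈ S, CuntzSubequiv b (γ a)

lemma CuntzSubequiv.map {D : Type*} [CStarAlgebra D] {a b : D}
    (γ : D ≃⋆ₐ[ℂ] D) (h : CuntzSubequiv a b) : CuntzSubequiv (γ a) (γ b) := by
  obtain ⟨v, hv⟩ := h
  refine ⟨fun n => γ (v n), ?_⟩
  convert hv using 2 with n
  rw [← map_star, ← map_mul, ← map_mul, ← map_sub, StarAlgEquiv.norm_map γ]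

lemma CuntzSubequiv.trans {D : Type*} [CStarAlgebra D] {a b c : D}
    (hab : CuntzSubequiv a b) (hbc : CuntzSubequiv b c) : CuntzSubequiv a c := by
  obtain ⟨v, hv⟩ := hab
  obtain ⟨w, hw⟩ := hbc
  -- for each n, pick m with ‖w m * c * star (w m) - b‖ ≤ (1/(n+1)) / (‖v n‖^2 + 1)
  have key : ∀ n : ℕ, ∃ m : ℕ,
      ‖w m * c * star (w m) - b‖ ≤ (1 / (n + 1)) / (‖v n‖ ^ 2 + 1) := by
    intro n
    have hpos : (0 : ℝ) < (1 / (n + 1)) / (‖v n‖ ^ 2 + 1) := by positivity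
    have := (Metric.tendsto_atTop.mp hw) _ hpos
    obtain ⟨m, hm⟩ := this
    refine ⟨m, ?_⟩
    have := hm m le_rfl
    rw [Real.dist_eq, sub_zero] at this
    exact le_of_lt (lt_of_le_of_lt (le_abs_self _) this)
  choose m hm using key
  refine ⟨fun n => v n * w (m n), ?_⟩
  have hbound : ∀ n : ℕ, ‖v n * w (m n) * c * star (v n * w (m n)) - a‖ ≤
      1 / (n + 1) + ‖v n * b * star (v n) - a‖ := by
    intro n
    have h1 : v n * w (m n) * c * star (v n * w (m n)) - a =
        v n * (w (m n) * c * star (w (m n)) - b) * star (v n) +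
        (v n * b * star (v n) - a) := by
      rw [star_mul]; noncomm_ring
    rw [h1]
    refine (norm_add_le _ _).trans (add_le_add_left ?_ _)
    calc ‖v n * (w (m n) * c * star (w (m n)) - b) * star (v n)‖
        ≤ ‖v n‖ * ‖w (m n) * c * star (w (m n)) - b‖ * ‖star (v n)‖ :=
          (norm_mul_le _ _).trans (mul_le_mul_of_nonneg_right (norm_mul_le _ _) (norm_nonneg _))
      _ = ‖v n‖ ^ 2 * ‖w (m n) * c * star (w (m n)) - b‖ := by
          rw [norm_star]; ring
      _ ≤ ‖v n‖ ^ 2 * ((1 / (n + 1)) / (‖v n‖ ^ 2 + 1)) := by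
          exact mul_le_mul_of_nonneg_left (hm n) (by positivity)
      _ ≤ 1 / (n + 1) := by
          rw [div_eq_mul_inv, ← mul_assoc]
          have h2 : ‖v n‖ ^ 2 * (1 / (n + 1)) ≤ (‖v n‖ ^ 2 + 1) * (1 / (n + 1)) := by
            have : (0:ℝ) < 1 / (n+1) := by positivity
            nlinarith [sq_nonneg (‖v n‖)]
          calc ‖v n‖ ^ 2 * (1 / (↑n + 1)) * (‖v n‖ ^ 2 + 1)⁻¹
              ≤ (‖v n‖ ^ 2 + 1) * (1 / (↑n + 1)) * (‖v n‖ ^ 2 + 1)⁻¹ := by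
                apply mul_le_mul_of_nonneg_right h2 (by positivity)
            _ = 1 / (↑n + 1) := by
                field_simp
  have hlim : Filter.Tendsto (fun n : ℕ => 1 / ((n:ℝ) + 1) + ‖v n * b * star (v n) - a‖)
      Filter.atTop (nhds 0) := by
    have := tendsto_one_div_add_atTop_nhds_zero_nat.add hv
    simpa using this
  exact squeeze_zero (fun n => norm_nonneg _) hbound hlim

/-- Let `D` be a simple unital C*-algebra.  If `S₁` and `S₂` are pseudoperiodic
sets of *-automorphisms of `D`, then both the set of compositions
`S₁S₂ = {γ₁ ∘ γ₂ : γ₁ ∈ S₁, γ₂ ∈ S₂}` and the union `S₁ ∪ S₂` are pseudoperiodic. -/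
theorem pseudoperiodic_comp_and_union
    {D : Type*} [CStarAlgebra D] [PartialOrder D] [StarOrderedRing D]
    (hsimple : ∀ I : TwoSidedIdeal D, IsClosed (I : Set D) → I = ⊥ ∨ I = ⊤)
    (S₁ S₂ : Set (D ≃⋆ₐ[ℂ] D))
    (h₁ : Pseudoperiodic S₁) (h₂ : Pseudoperiodic S₂) :
    Pseudoperiodic {γ : D ≃⋆ₐ[ℂ] D | ∃ γ₁ ∈ S₁, ∃ γ₂ ∈ S₂, γ = γ₂.trans γ₁} ∧
    Pseudoperiodic (S₁ ∪ S₂) := by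
  constructor
  · intro a ha hane
    obtain ⟨c, hc, hcne, hca, hcS₂⟩ := h₂ a ha hane
    obtain ⟨b, hb, hbne, hbc, hbS₁⟩ := h₁ c hc hcne
    refine ⟨b, hb, hbne, hbc.trans hca, ?_⟩
    rintro γ ⟨γ₁, hγ₁, γ₂, hγ₂, rfl⟩
    exact (hbS₁ γ₁ hγ₁).trans ((hcS₂ γ₂ hγ₂).map γ₁)
  · intro a ha hane
    obtain ⟨c, hc, hcne, hca, hcS₁⟩ := h₁ a ha hane
    obtain ⟨b, hb, hbne, hbc, hbS₂⟩ := h₂ c hc hcne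
    refine ⟨b, hb, hbne, hbc.trans hca, ?_⟩
    rintro γ (hγ | hγ)
    · exact hbc.trans (hcS₁ γ hγ)
    · exact (hbS₂ γ hγ).trans (hca.map γ)
end

section
/- Let L be a compact Hausdorff space and let D be a simple unital C*-algebra. Let τ : C(L, D) → C(L, D) be a *-algebra automorphism which is C(L)-linear, i.e., τ(f·a) = f·τ(a) for every f ∈ C(L, ℂ) and a ∈ C(L, D), where (f·a)(x) = f(x) a(x). Then for every x ∈ L the map t_x : D → D defined by t_x(d) = τ(1 ⊗ d)(x), where 1 ⊗ d denotes the constant function on L with value d, is a *-automorphism of D; moreover τ(a)(x) = t_x(a(x)) for all a ∈ C(L, D) and x ∈ L, and for every d ∈ D the map x ↦ t_x(d) from L to D is norm-continuous. -/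
/-!
A `C(L)`-linear map `σ` is local: if `a x = 0`, then by Urysohn `a` is uniformly close to `g • a`
for some `g : C(L)` vanishing at `x`, so `σ a x = σ (a - g • a) x` is small whenever `σ` is
contractive. Hence `τ a x` only depends on `a x`, which makes `d ↦ τ (const d) x` multiplicative,
star-preserving, and inverted by the same construction applied to `τ.symm`.
-/

open ContinuousMap

section

variable {L : Type*} [TopologicalSpace L]

theorem StarAlgEquiv.symm_smul_comm {A B : Type*} [CStarAlgebra A] [CStarAlgebra B]
    (τ : C(L, A) ≃⋆ₐ[ℂ] C(L, B))
    (hτ : ∀ (f : C(L, ℂ)) a, τ (f • a) = f • τ a) (f : C(L, ℂ)) (b : C(L, B)) :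
    τ.symm (f • b) = f • τ.symm b :=
  τ.symm_apply_eq.2 (by rw [hτ, τ.apply_symm_apply])

variable [CompactSpace L] [T2Space L]

section Locality

variable {𝕜 E F : Type*} [RCLike 𝕜]
  [NormedAddCommGroup E] [NormedSpace 𝕜 E] [NormedAddCommGroup F] [NormedSpace 𝕜 F]

theorem ContinuousMap.exists_norm_sub_smul_le_of_apply_eq_zero {a : C(L, E)} {x : L}
    (hax : a x = 0) {ε : ℝ} (hε : 0 < ε) : ∃ g : C(L, 𝕜), g x = 0 ∧ ‖a - g • a‖ ≤ ε := by
  have hU : IsOpen {y | ‖a y‖ < ε} := isOpen_lt (by fun_prop) continuous_const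
  obtain ⟨f, hfx, hf_one, hf_mem⟩ :=
    exists_continuous_zero_one_of_isClosed (isClosed_singleton (x := x)) hU.isClosed_compl
      (Set.disjoint_singleton_left.2 (by simpa [hax] using hε))
  let g : C(L, 𝕜) := ⟨fun y => (f y : 𝕜), by fun_prop⟩
  refine ⟨g, by simpa [g] using hfx rfl, (ContinuousMap.norm_le _ hε.le).2 fun y => ?_⟩
  have hy : (a - g • a) y = ((1 - f y : ℝ) : 𝕜) • a y := by
    simp [g, ContinuousMap.smul_apply', sub_smul]
  rw [hy, norm_smul, RCLike.norm_ofReal, abs_of_nonneg (by linarith [(hf_mem y).2])]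
  by_cases hay : ‖a y‖ < ε
  · exact (mul_le_of_le_one_left (norm_nonneg _) (by linarith [(hf_mem y).1])).trans hay.le
  · simp [hf_one hay, hε.le]

theorem ContinuousMap.apply_eq_zero_of_smul_comm (σ : C(L, E) →+ C(L, F))
    (hσ_norm : ∀ a, ‖σ a‖ ≤ ‖a‖) (hσ : ∀ (g : C(L, 𝕜)) a, σ (g • a) = g • σ a)
    {a : C(L, E)} {x : L} (hax : a x = 0) : σ a x = 0 := by
  refine norm_le_zero_iff.1 (le_of_forall_pos_le_add fun ε hε => ?_)
  obtain ⟨g, hgx, hg⟩ := exists_norm_sub_smul_le_of_apply_eq_zero (𝕜 := 𝕜) hax hε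
  calc ‖σ a x‖ = ‖σ (a - g • a) x‖ := by simp [map_sub, hσ, ContinuousMap.smul_apply', hgx]
    _ ≤ ‖σ (a - g • a)‖ := norm_coe_le_norm _ x
    _ ≤ ε := (hσ_norm _).trans hg
    _ = 0 + ε := (zero_add ε).symm

end Locality

section FiberAutomorphism

variable {A B : Type*} [CStarAlgebra A] [CStarAlgebra B]

theorem StarAlgEquiv.apply_eq_of_apply_eq (τ : C(L, A) ≃⋆ₐ[ℂ] C(L, B))
    (hτ : ∀ (f : C(L, ℂ)) a, τ (f • a) = f • τ a) {a b : C(L, A)} {x : L} (hab : a x = b x) :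
    τ a x = τ b x := by
  have := apply_eq_zero_of_smul_comm (τ : C(L, A) →+ C(L, B))
    (NonUnitalStarAlgHom.norm_apply_le τ) hτ (a := a - b) (x := x) (by simp [hab])
  simpa [sub_eq_zero] using this

def StarAlgEquiv.fiber (τ : C(L, A) ≃⋆ₐ[ℂ] C(L, B))
    (hτ : ∀ (f : C(L, ℂ)) a, τ (f • a) = f • τ a) (x : L) : A ≃⋆ₐ[ℂ] B where
  toFun d := τ (const L d) x
  invFun d := τ.symm (const L d) x
  left_inv d := by
    simpa using (τ.symm.apply_eq_of_apply_eq (τ.symm_smul_comm hτ)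
      (a := const L (τ (const L d) x)) (b := τ (const L d)) rfl)
  right_inv d := by
    simpa using τ.apply_eq_of_apply_eq hτ (a := const L (τ.symm (const L d) x))
      (b := τ.symm (const L d)) rfl
  map_add' d e := congr($(map_add τ (const L d) (const L e)) x)
  map_mul' d e := congr($(map_mul τ (const L d) (const L e)) x)
  map_smul' c d := congr($(map_smul τ c (const L d)) x)
  map_star' d := congr($(map_star τ (const L d)) x)

end FiberAutomorphism

end

theorem transitionMap_of_CL_linear_automorphism_general
    {L : Type*} [TopologicalSpace L] [CompactSpace L] [T2Space L]
    {D : Type*} [CStarAlgebra D]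
    (τ : C(L, D) ≃⋆ₐ[ℂ] C(L, D))
    (hlin : ∀ (f : C(L, ℂ)) (a : C(L, D)), τ (f • a) = f • τ a) :
    (∀ x : L, ∃ t : D ≃⋆ₐ[ℂ] D,
      (∀ d : D, t d = τ (ContinuousMap.const L d) x) ∧
      (∀ a : C(L, D), τ a x = t (a x))) ∧
    (∀ d : D, Continuous fun x : L => τ (ContinuousMap.const L d) x) :=
  ⟨fun x => ⟨τ.fiber hlin x, fun _ => rfl, fun _ => τ.apply_eq_of_apply_eq hlin rfl⟩,
    fun d => (τ (const L d)).continuous⟩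

/-- Let `L` be a compact Hausdorff space and `D` a simple unital C*-algebra.
Let `τ` be a `C(L)`-linear *-algebra automorphism of `C(L, D)`.  Then for every `x ∈ L` the map
`d ↦ τ(1 ⊗ d)(x)` is a *-automorphism `t_x` of `D`, one has `τ(a)(x) = t_x(a(x))` for all
`a ∈ C(L, D)` and `x ∈ L`, and for each `d ∈ D` the map `x ↦ t_x(d)` is norm-continuous. -/
theorem transitionMap_of_CL_linear_automorphism
    {L : Type*} [TopologicalSpace L] [CompactSpace L] [T2Space L]
    {D : Type*} [CStarAlgebra D]
    (hsimple : ∀ I : TwoSidedIdeal D, IsClosed (I : Set D) → I = ⊥ ∨ I = ⊤)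
    (τ : C(L, D) ≃⋆ₐ[ℂ] C(L, D))
    (hlin : ∀ (f : C(L, ℂ)) (a : C(L, D)), τ (f • a) = f • τ a) :
    (∀ x : L, ∃ t : D ≃⋆ₐ[ℂ] D,
      (∀ d : D, t d = τ (ContinuousMap.const L d) x) ∧
      (∀ a : C(L, D), τ a x = t (a x))) ∧
    (∀ d : D, Continuous fun x : L => τ (ContinuousMap.const L d) x) :=
  transitionMap_of_CL_linear_automorphism_general τ hlin
end

section
/- Let X be a compact Hausdorff space, let A be a unital C*-algebra, and let η : C(X, ℂ) → A be a unital *-homomorphism whose range lies in the center of A. For x ∈ X let I_x be the smallest closed two-sided ideal of A containing {η(f) : f ∈ C(X, ℂ), f(x) = 0}, and for a closed subset K ⊆ X let I_K = ⋂_{x ∈ K} I_x. Let a, b ∈ A be positive and let K ⊆ X be a closed subset such that: (i) a ∈ I_x and b ∈ I_x for every x ∈ X \ K; (ii) for every ε > 0 there exists v ∈ A with dist(a − v b v*, I_K) < ε. Then a is Cuntz subequivalent to b in A, i.e., for every ε > 0 there exists w ∈ A with ‖a − w b w*‖ < ε. -/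
set_option linter.unusedSectionVars false
set_option maxHeartbeats 1000000

section Aux

variable {X : Type*} [TopologicalSpace X] [CompactSpace X] [T2Space X]
variable {A : Type*} [CStarAlgebra A] [PartialOrder A] [StarOrderedRing A]

noncomputable def oR (f : C(X, ℝ)) : C(X, ℂ) :=
  ⟨fun y => (f y : ℂ), Complex.continuous_ofReal.comp f.continuous⟩

@[simp] lemma oR_apply (f : C(X, ℝ)) (y : X) : oR f y = (f y : ℂ) := rfl

lemma star_oR (f : C(X, ℝ)) : star (oR f) = oR f := by
  ext y; simp [oR, Complex.conj_ofReal]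

lemma oR_mul (f g : C(X, ℝ)) : oR (f * g) = oR f * oR g := by
  ext y; push_cast [oR]; simp

lemma oR_sum {ι : Type*} (t : Finset ι) (f : ι → C(X, ℝ)) :
    oR (∑ i ∈ t, f i) = ∑ i ∈ t, oR (f i) := by
  ext y; simp [oR]

lemma oR_smul (r : ℝ) (f : C(X, ℝ)) : oR (r • f) = (r : ℂ) • oR f := by
  ext y; push_cast [oR]; simp

lemma eta_nonneg (η : C(X, ℂ) →⋆ₐ[ℂ] A) {g : C(X, ℝ)} (hg : ∀ y, 0 ≤ g y) :
    0 ≤ η (oR g) := by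
  set s : C(X, ℝ) := ⟨fun y => Real.sqrt (g y), (Real.continuous_sqrt.comp g.continuous)⟩ with hs
  have h1 : oR g = star (oR s) * oR s := by
    rw [star_oR, ← oR_mul]
    ext y
    simp [hs, Real.mul_self_sqrt (hg y)]
  rw [h1, map_mul, map_star]
  exact star_mul_self_nonneg _

/-- pointwise norm of a complex function, as a real continuous map -/
noncomputable def cmodR (c : C(X, ℂ)) : C(X, ℝ) :=
  ⟨fun y => ‖c y‖, continuous_norm.comp c.continuous⟩

@[simp] lemma cmodR_apply (c : C(X, ℂ)) (y : X) : cmodR c y = ‖c y‖ := rfl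

noncomputable def csqrtC (c : C(X, ℂ)) : C(X, ℂ) :=
  oR ⟨fun y => Real.sqrt ‖c y‖, Real.continuous_sqrt.comp (continuous_norm.comp c.continuous)⟩

@[simp] lemma csqrtC_apply (c : C(X, ℂ)) (y : X) :
    csqrtC c y = ((Real.sqrt ‖c y‖ : ℝ) : ℂ) := rfl

noncomputable def cdivC (c : C(X, ℂ)) : C(X, ℂ) := by
  refine ⟨fun y => c y / ((Real.sqrt ‖c y‖ : ℝ) : ℂ), ?_⟩
  rw [continuous_iff_continuousAt]
  intro y₀
  by_cases h : c y₀ = 0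
  · have hval : (fun y => c y / ((Real.sqrt ‖c y‖ : ℝ) : ℂ)) y₀ = 0 := by simp [h]
    rw [ContinuousAt]
    rw [show c y₀ / ((Real.sqrt ‖c y₀‖ : ℝ) : ℂ) = 0 by simp [h]]
    apply squeeze_zero_norm (a := fun y => Real.sqrt ‖c y‖)
    · intro y
      rw [norm_div]
      rcases eq_or_ne (c y) 0 with hy | hy
      · simp [hy]
      · have h1 : (0:ℝ) < Real.sqrt ‖c y‖ := Real.sqrt_pos.2 (norm_pos_iff.2 hy)
        simp only [Complex.norm_real, Real.norm_eq_abs]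
        rw [abs_of_pos (by simpa using h1), div_le_iff₀ (by simpa using h1),
          Real.mul_self_sqrt (by positivity)]
    · have h5 : Filter.Tendsto (fun y => Real.sqrt ‖c y‖) (nhds y₀)
          (nhds (Real.sqrt ‖c y₀‖)) :=
        ((Real.continuous_sqrt.comp (continuous_norm.comp c.continuous)).tendsto y₀)
      simpa [h] using h5
  · have hd : ((Real.sqrt ‖c y₀‖ : ℝ) : ℂ) ≠ 0 := by
      simp only [ne_eq, Complex.ofReal_eq_zero]
      exact (Real.sqrt_pos.2 (norm_pos_iff.2 h)).ne'
    exact ContinuousAt.div c.continuous.continuousAt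
      ((Complex.continuous_ofReal.comp
        (Real.continuous_sqrt.comp (continuous_norm.comp c.continuous))).continuousAt) hd

@[simp] lemma cdivC_apply (c : C(X, ℂ)) (y : X) :
    cdivC c y = c y / ((Real.sqrt ‖c y‖ : ℝ) : ℂ) := rfl

lemma csqrtC_mul_self (c : C(X, ℂ)) : csqrtC c * csqrtC c = oR (cmodR c) := by
  ext y
  simp only [ContinuousMap.mul_apply, csqrtC_apply, oR_apply, cmodR_apply]
  rw [← Complex.ofReal_mul, Real.mul_self_sqrt (norm_nonneg _)]

lemma star_csqrtC (c : C(X, ℂ)) : star (csqrtC c) = csqrtC c := star_oR _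

lemma csqrtC_mul_cdivC (c : C(X, ℂ)) : csqrtC c * cdivC c = c := by
  ext y
  rcases eq_or_ne (c y) 0 with hy | hy
  · simp [hy]
  · have hd : ((Real.sqrt ‖c y‖ : ℝ) : ℂ) ≠ 0 := by
      simp only [ne_eq, Complex.ofReal_eq_zero]
      exact (Real.sqrt_pos.2 (norm_pos_iff.2 hy)).ne'
    simp only [ContinuousMap.mul_apply, csqrtC_apply, cdivC_apply]
    rw [mul_div_cancel₀ _ hd]

lemma star_cdivC_mul_csqrtC (c : C(X, ℂ)) : star (cdivC c) * csqrtC c = star c := by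
  ext y
  rcases eq_or_ne (c y) 0 with hy | hy
  · simp [hy]
  · have hd : ((Real.sqrt ‖c y‖ : ℝ) : ℂ) ≠ 0 := by
      simp only [ne_eq, Complex.ofReal_eq_zero]
      exact (Real.sqrt_pos.2 (norm_pos_iff.2 hy)).ne'
    simp only [ContinuousMap.mul_apply, ContinuousMap.star_apply, csqrtC_apply, cdivC_apply]
    rw [star_div₀, RCLike.star_def, Complex.conj_ofReal, div_mul_cancel₀ _ hd]

lemma star_cdivC_mul_cdivC (c : C(X, ℂ)) : star (cdivC c) * cdivC c = oR (cmodR c) := by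
  ext y
  rcases eq_or_ne (c y) 0 with hy | hy
  · simp [hy]
  · have h1 : (0:ℝ) < Real.sqrt ‖c y‖ := Real.sqrt_pos.2 (norm_pos_iff.2 hy)
    have hd : ((Real.sqrt ‖c y‖ : ℝ) : ℂ) ≠ 0 := by
      simp only [ne_eq, Complex.ofReal_eq_zero]; exact h1.ne'
    simp only [ContinuousMap.mul_apply, ContinuousMap.star_apply, cdivC_apply, oR_apply,
      cmodR_apply]
    rw [star_div₀, RCLike.star_def, Complex.conj_ofReal, div_mul_div_comm]
    have h2 : (starRingEnd ℂ) (c y) * c y = ((‖c y‖ ^ 2 : ℝ) : ℂ) := by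
      rw [← Complex.normSq_eq_conj_mul_self]
      norm_cast
      rw [← Complex.sq_norm]
    have h3 : ((Real.sqrt ‖c y‖ : ℝ) : ℂ) * ((Real.sqrt ‖c y‖ : ℝ) : ℂ) = ((‖c y‖ : ℝ) : ℂ) := by
      rw [← Complex.ofReal_mul, Real.mul_self_sqrt (norm_nonneg _)]
    have h4 : ((‖c y‖ : ℝ) : ℂ) ≠ 0 := by
      simpa using (norm_pos_iff.2 hy).ne'
    rw [h2, h3]
    push_cast
    rw [sq, mul_div_assoc, div_self h4, mul_one]


variable {A : Type*} [CStarAlgebra A] [PartialOrder A] [StarOrderedRing A]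

/-- Key pairing inequality. -/
lemma pairing (η : C(X, ℂ) →⋆ₐ[ℂ] A) (c : C(X, ℂ)) (p q : A) :
    star p * (η c * q) + star q * (η (star c) * p) ≤
      star p * (η (oR (cmodR c)) * p) + star q * (η (oR (cmodR c)) * q) := by
  have h0 : 0 ≤ star (η (csqrtC c) * p - η (cdivC c) * q) *
      (η (csqrtC c) * p - η (cdivC c) * q) := star_mul_self_nonneg _
  have hexp : star (η (csqrtC c) * p - η (cdivC c) * q) *
      (η (csqrtC c) * p - η (cdivC c) * q) =
      (star p * (η (oR (cmodR c)) * p) + star q * (η (oR (cmodR c)) * q)) -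
      (star p * (η c * q) + star q * (η (star c) * p)) := by
    have e1 : ∀ (f g : C(X, ℂ)) (r s : A),
        (star r * η (star f)) * (η g * s) = star r * (η (star f * g) * s) := by
      intro f g r s
      rw [map_mul]
      simp [mul_assoc]
    rw [star_sub, star_mul, star_mul, ← map_star, ← map_star, sub_mul, mul_sub, mul_sub]
    rw [e1, e1, e1, e1]
    rw [star_csqrtC, csqrtC_mul_self, csqrtC_mul_cdivC, star_cdivC_mul_csqrtC,
      star_cdivC_mul_cdivC]
    abel
  rw [hexp] at h0
  exact sub_nonneg.1 h0

lemma eta_const (η : C(X, ℂ) →⋆ₐ[ℂ] A) (r : ℝ) :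
    η (oR ((algebraMap ℝ C(X, ℝ)) r)) = algebraMap ℝ A r := by
  have h1 : oR ((algebraMap ℝ C(X, ℝ)) r) = algebraMap ℂ C(X, ℂ) (r : ℂ) := by
    ext y
    simp [Algebra.algebraMap_eq_smul_one]
  rw [h1, AlgHomClass.commutes, IsScalarTower.algebraMap_apply ℝ ℂ A,
    Complex.coe_algebraMap]

lemma term_bound (η : C(X, ℂ) →⋆ₐ[ℂ] A)
    (hcentral : ∀ (f : C(X, ℂ)) (c : A), η f * c = c * η f)
    (m : C(X, ℝ)) (hm : ∀ y, 0 ≤ m y) {z : A} {D : ℝ} (hD : 0 ≤ D)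
    (hz : ‖z‖ ≤ D) :
    star z * (η (oR m) * z) ≤ η (oR (D ^ 2 • m)) := by
  set s : C(X, ℝ) := ⟨fun y => Real.sqrt (m y), (Real.continuous_sqrt.comp m.continuous)⟩ with hs
  have hss : s * s = m := by
    ext y
    exact Real.mul_self_sqrt (hm y)
  have key1 : star z * z ≤ algebraMap ℝ A (D ^ 2) := by
    have k1 : star z * z ≤ algebraMap ℝ A ‖star z * z‖ :=
      IsSelfAdjoint.le_algebraMap_norm_self (IsSelfAdjoint.star_mul_self z)
    refine k1.trans ?_
    have k2 : (0:ℝ) ≤ D ^ 2 - ‖star z * z‖ := by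
      rw [CStarRing.norm_star_mul_self]
      nlinarith [norm_nonneg z]
    have k3 : 0 ≤ algebraMap ℝ A (D ^ 2 - ‖star z * z‖) := by
      rw [← eta_const η]
      exact eta_nonneg η (fun y => by simpa using k2)
    rw [map_sub] at k3
    exact sub_nonneg.1 k3
  have key2 : star (η (oR s)) * (star z * z) * (η (oR s)) ≤
      star (η (oR s)) * (algebraMap ℝ A (D ^ 2)) * (η (oR s)) :=
    star_left_conjugate_le_conjugate key1 _
  have hstar : star (η (oR s)) = η (oR s) := by rw [← map_star, star_oR]
  have hmm : η (oR m) = η (oR s) * η (oR s) := by rw [← map_mul, ← oR_mul, hss]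
  have lhs_eq : star (η (oR s)) * (star z * z) * (η (oR s)) = star z * (η (oR m) * z) := by
    rw [hstar]
    calc η (oR s) * (star z * z) * (η (oR s))
        = η (oR s) * ((star z * z) * η (oR s)) := by rw [mul_assoc]
      _ = η (oR s) * (η (oR s) * (star z * z)) := by rw [← hcentral (oR s) (star z * z)]
      _ = η (oR s) * η (oR s) * (star z * z) := by rw [mul_assoc]
      _ = η (oR m) * (star z * z) := by rw [hmm]
      _ = η (oR m) * star z * z := by rw [mul_assoc]
      _ = star z * η (oR m) * z := by rw [hcentral (oR m) (star z)]
      _ = star z * (η (oR m) * z) := by rw [mul_assoc]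
  have rhs_eq : star (η (oR s)) * (algebraMap ℝ A (D ^ 2)) * (η (oR s)) =
      η (oR (D ^ 2 • m)) := by
    rw [hstar, ← eta_const η (D ^ 2), ← map_mul, ← map_mul, ← oR_mul, ← oR_mul]
    congr 1
    congr 1
    ext y
    simp only [ContinuousMap.mul_apply, ContinuousMap.smul_apply, smul_eq_mul,
      algebraMap_apply]
    have h5 : s y * s y = m y := Real.mul_self_sqrt (hm y)
    calc s y * (D ^ 2 * 1) * s y = (D ^ 2) * (s y * s y) := by ring
      _ = D ^ 2 * m y := by rw [h5]
  rw [lhs_eq, rhs_eq] at key2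
  exact key2


lemma oR_sub (f g : C(X, ℝ)) : oR (f - g) = oR f - oR g := by
  ext y; push_cast [oR]; simp

lemma half_nonneg (η : C(X, ℂ) →⋆ₐ[ℂ] A) {p : A} (h : 0 ≤ p + p) : 0 ≤ p := by
  set v : ℝ := Real.sqrt 2⁻¹ with hv
  set cc : A := algebraMap ℝ A v with hcc
  have hstar : star cc = cc := by
    rw [hcc, show (algebraMap ℝ A v : A) = η (oR (algebraMap ℝ C(X, ℝ) v)) from
      (eta_const η v).symm, ← map_star, star_oR]
  have h2 := star_left_conjugate_nonneg h cc
  rw [hstar] at h2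
  have h3 : cc * ((p + p) * cc) = p := by
    rw [hcc, ← Algebra.commutes v (p + p), ← Algebra.smul_def, ← Algebra.smul_def,
      smul_smul, hv, Real.mul_self_sqrt (by norm_num), show p + p = (2:ℝ) • p from ?_,
      smul_smul]
    · norm_num
    · rw [two_smul]
  rw [mul_assoc, h3] at h2
  exact h2

/-- The convexity trick: a norm bound for central-coefficient combinations. -/
lemma trick {ι : Type*} (η : C(X, ℂ) →⋆ₐ[ℂ] A)
    (hcentral : ∀ (f : C(X, ℂ)) (c : A), η f * c = c * η f)
    (t : Finset ι) (u : ι → C(X, ℂ)) (z : ι → A) {C D : ℝ}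
    (hC : 0 ≤ C) (hD : 0 ≤ D)
    (hz : ∀ i ∈ t, ‖z i‖ ≤ D)
    (hu : ∀ y, ∑ i ∈ t, ‖u i y‖ ≤ C) :
    ‖∑ i ∈ t, η (u i) * z i‖ ≤ C * D := by
  set S := ∑ i ∈ t, η (u i) * z i with hS
  set m : ι → ι → C(X, ℝ) := fun i j => cmodR (star (u i) * u j) with hm
  have hm_apply : ∀ i j y, m i j y = ‖u i y‖ * ‖u j y‖ := by
    intro i j y
    simp [hm, cmodR]
  have hm_nonneg : ∀ i j y, 0 ≤ m i j y := by
    intro i j y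
    rw [hm_apply i j y]
    positivity
  set Mt : C(X, ℝ) := ∑ i ∈ t, ∑ j ∈ t, m i j with hMt
  set R : A := algebraMap ℝ A ((C * D) ^ 2) with hR
  have h1 : star S * S = ∑ i ∈ t, ∑ j ∈ t,
      star (z i) * (η (star (u i) * u j) * z j) := by
    rw [hS, star_sum, Finset.sum_mul_sum]
    refine Finset.sum_congr rfl fun i _ => Finset.sum_congr rfl fun j _ => ?_
    rw [star_mul, ← map_star, map_mul]
    simp [mul_assoc]
  have hTswap : (∑ i ∈ t, ∑ j ∈ t, star (z i) * (η (star (u i) * u j) * z j))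
      = ∑ i ∈ t, ∑ j ∈ t, star (z j) * (η (star (u j) * u i) * z i) := Finset.sum_comm
  have h2 : star S * S + star S * S = ∑ i ∈ t, ∑ j ∈ t,
      (star (z i) * (η (star (u i) * u j) * z j) +
        star (z j) * (η (star (u j) * u i) * z i)) := by
    rw [h1]
    nth_rewrite 2 [hTswap]
    rw [← Finset.sum_add_distrib]
    exact Finset.sum_congr rfl fun i _ => (Finset.sum_add_distrib).symm
  have h3 : ∀ i ∈ t, ∀ j ∈ t,
      star (z i) * (η (star (u i) * u j) * z j) +
        star (z j) * (η (star (u j) * u i) * z i)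
      ≤ η (oR (D ^ 2 • m i j)) + η (oR (D ^ 2 • m i j)) := by
    intro i hi j hj
    have hp := pairing η (star (u i) * u j) (z i) (z j)
    have hsc : star (star (u i) * u j) = star (u j) * u i := by
      rw [star_mul, star_star]
    rw [hsc] at hp
    refine hp.trans (add_le_add ?_ ?_)
    · exact term_bound η hcentral (m i j) (fun y => hm_nonneg i j y) hD (hz i hi)
    · exact term_bound η hcentral (m i j) (fun y => hm_nonneg i j y) hD (hz j hj)
  have hW : (∑ i ∈ t, ∑ j ∈ t, η (oR (D ^ 2 • m i j))) = η (oR (D ^ 2 • Mt)) := by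
    rw [hMt, Finset.smul_sum]
    rw [show (∑ i ∈ t, D ^ 2 • ∑ j ∈ t, m i j) = ∑ i ∈ t, ∑ j ∈ t, D ^ 2 • m i j from
      Finset.sum_congr rfl fun i _ => Finset.smul_sum]
    rw [oR_sum, map_sum]
    refine Finset.sum_congr rfl fun i _ => ?_
    rw [oR_sum, map_sum]
  have h4 : star S * S + star S * S ≤ η (oR (D ^ 2 • Mt)) + η (oR (D ^ 2 • Mt)) := by
    rw [h2, ← hW, ← Finset.sum_add_distrib]
    rw [show (∑ i ∈ t, (∑ j ∈ t, η (oR (D ^ 2 • m i j)) + ∑ j ∈ t, η (oR (D ^ 2 • m i j))))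
      = ∑ i ∈ t, ∑ j ∈ t, (η (oR (D ^ 2 • m i j)) + η (oR (D ^ 2 • m i j))) from
      Finset.sum_congr rfl fun i _ => (Finset.sum_add_distrib).symm]
    refine Finset.sum_le_sum fun i hi => Finset.sum_le_sum fun j hj => h3 i hi j hj
  have h6 : η (oR (D ^ 2 • Mt)) ≤ R := by
    have h7 : 0 ≤ η (oR (algebraMap ℝ C(X, ℝ) ((C * D) ^ 2) - D ^ 2 • Mt)) := by
      refine eta_nonneg η fun y => ?_
      have hMty : Mt y = (∑ i ∈ t, ‖u i y‖) * (∑ j ∈ t, ‖u j y‖) := by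
        rw [hMt, Finset.sum_mul_sum]
        rw [show ((∑ i ∈ t, ∑ j ∈ t, m i j : C(X, ℝ)) y) = ∑ i ∈ t, ∑ j ∈ t, m i j y from by
          simp]
        exact Finset.sum_congr rfl fun i _ => Finset.sum_congr rfl fun j _ => hm_apply i j y
      have hsum_nonneg : 0 ≤ ∑ i ∈ t, ‖u i y‖ :=
        Finset.sum_nonneg fun i _ => norm_nonneg _
      have huy := hu y
      simp only [ContinuousMap.sub_apply, ContinuousMap.smul_apply, smul_eq_mul,
        algebraMap_apply, smul_eq_mul, mul_one]
      rw [hMty]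
      nlinarith [mul_le_mul_of_nonneg_left
        (mul_le_mul huy huy hsum_nonneg hC) (sq_nonneg D)]
    rw [oR_sub, map_sub, eta_const η] at h7
    rw [hR]
    exact sub_nonneg.1 h7
  have h5 : star S * S ≤ R := by
    have h8 : star S * S + star S * S ≤ R + R := h4.trans (add_le_add h6 h6)
    have h9 : 0 ≤ (R - star S * S) + (R - star S * S) := by
      have := sub_nonneg.2 h8
      rwa [show R + R - (star S * S + star S * S)
        = (R - star S * S) + (R - star S * S) from by abel] at this
    exact sub_nonneg.1 (half_nonneg η h9)
  have hone : ‖(1:A)‖ ≤ 1 := by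
    have h7 : ‖(1:A)‖ = ‖(1:A)‖ * ‖(1:A)‖ := by
      conv_lhs => rw [show (1:A) = star (1:A) * 1 by simp]
      rw [CStarRing.norm_star_mul_self]
    nlinarith [norm_nonneg (1:A)]
  have hnorm : ‖star S * S‖ ≤ ‖R‖ :=
    CStarAlgebra.norm_le_norm_of_nonneg_of_le (star_mul_self_nonneg S) h5
  have hRnorm : ‖R‖ ≤ (C * D) ^ 2 := by
    rw [hR, Algebra.algebraMap_eq_smul_one, norm_smul]
    rw [Real.norm_eq_abs, abs_of_nonneg (by positivity)]
    calc (C * D) ^ 2 * ‖(1:A)‖ ≤ (C * D) ^ 2 * 1 := by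
          exact mul_le_mul_of_nonneg_left hone (by positivity)
      _ = (C * D) ^ 2 := mul_one _
  have hfin : ‖S‖ * ‖S‖ ≤ (C * D) ^ 2 := by
    rw [← CStarRing.norm_star_mul_self]
    exact hnorm.trans hRnorm
  nlinarith [norm_nonneg S, mul_nonneg hC hD]


section Span

variable (η : C(X, ℂ) →⋆ₐ[ℂ] A)

lemma list_neg_sum (l : List (C(X, ℂ) × A)) :
    ((l.map fun p => (p.1, -p.2)).map fun p => η p.1 * p.2).sum
      = -((l.map fun p => η p.1 * p.2).sum) := by
  induction l with
  | nil => simp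
  | cons a tl ih =>
    simp only [List.map_cons, List.sum_cons, ih, mul_neg]
    abel

lemma list_mul_left (hcentral : ∀ (f : C(X, ℂ)) (c : A), η f * c = c * η f)
    (r : A) (l : List (C(X, ℂ) × A)) :
    ((l.map fun p => (p.1, r * p.2)).map fun p => η p.1 * p.2).sum
      = r * ((l.map fun p => η p.1 * p.2).sum) := by
  induction l with
  | nil => simp
  | cons a tl ih =>
    simp only [List.map_cons, List.sum_cons, ih, mul_add]
    congr 1
    rw [← mul_assoc, hcentral a.1 r, mul_assoc]

lemma list_mul_right (r : A) (l : List (C(X, ℂ) × A)) :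
    ((l.map fun p => (p.1, p.2 * r)).map fun p => η p.1 * p.2).sum
      = ((l.map fun p => η p.1 * p.2).sum) * r := by
  induction l with
  | nil => simp
  | cons a tl ih =>
    simp only [List.map_cons, List.sum_cons, ih, add_mul]
    congr 1
    rw [mul_assoc]

lemma list_normalize (l : List (C(X, ℂ) × A)) :
    ((l.map fun p => (((‖p.2‖ : ℝ) : ℂ) • p.1, ((‖p.2‖ : ℝ) : ℂ)⁻¹ • p.2)).map
        fun p => η p.1 * p.2).sum
      = (l.map fun p => η p.1 * p.2).sum := by
  induction l with
  | nil => simp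
  | cons a tl ih =>
    simp only [List.map_cons, List.sum_cons, ih]
    congr 1
    rcases eq_or_ne a.2 0 with h | h
    · simp [h]
    · rw [map_smul, smul_mul_assoc, mul_smul_comm, smul_smul,
        mul_inv_cancel₀ (by simpa using norm_ne_zero_iff.2 h), one_smul]

lemma approx_mem (hcentral : ∀ (f : C(X, ℂ)) (c : A), η f * c = c * η f)
    (I : X → TwoSidedIdeal A)
    (hIsmallest : ∀ x, ∀ L : TwoSidedIdeal A, IsClosed (L : Set A) →
      (∀ f : C(X, ℂ), f x = 0 → η f ∈ L) → I x ≤ L)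
    (x : X) {c : A} (hc : c ∈ I x) {ε : ℝ} (hε : 0 < ε) :
    ∃ l : List (C(X, ℂ) × A), (∀ p ∈ l, p.1 x = 0) ∧ (∀ p ∈ l, ‖p.2‖ ≤ 1) ∧
      ‖c - (l.map fun p => η p.1 * p.2).sum‖ < ε := by
  classical
  set Sx : Set A := {s | ∃ l : List (C(X, ℂ) × A), (∀ p ∈ l, p.1 x = 0) ∧
    s = (l.map fun p => η p.1 * p.2).sum} with hSx
  have hzero : (0 : A) ∈ Sx := ⟨[], by simp, by simp⟩
  have hadd : ∀ {s r : A}, s ∈ Sx → r ∈ Sx → s + r ∈ Sx := by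
    rintro s r ⟨l1, h1, rfl⟩ ⟨l2, h2, rfl⟩
    refine ⟨l1 ++ l2, ?_, by simp⟩
    intro p hp
    rcases List.mem_append.1 hp with h | h
    exacts [h1 p h, h2 p h]
  have hneg : ∀ {s : A}, s ∈ Sx → -s ∈ Sx := by
    rintro s ⟨l, h1, rfl⟩
    refine ⟨l.map fun p => (p.1, -p.2), ?_, (list_neg_sum η l).symm⟩
    intro p hp
    rcases List.mem_map.1 hp with ⟨q, hq, rfl⟩
    exact h1 q hq
  have hmull : ∀ (r : A), Set.MapsTo (fun w => r * w) Sx Sx := by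
    rintro r w ⟨l, h1, rfl⟩
    refine ⟨l.map fun p => (p.1, r * p.2), ?_, (list_mul_left η hcentral r l).symm⟩
    intro p hp
    rcases List.mem_map.1 hp with ⟨q, hq, rfl⟩
    exact h1 q hq
  have hmulr : ∀ (r : A), Set.MapsTo (fun w => w * r) Sx Sx := by
    rintro r w ⟨l, h1, rfl⟩
    refine ⟨l.map fun p => (p.1, p.2 * r), ?_, (list_mul_right η r l).symm⟩
    intro p hp
    rcases List.mem_map.1 hp with ⟨q, hq, rfl⟩
    exact h1 q hq
  set T : TwoSidedIdeal A := TwoSidedIdeal.mk' (closure Sx)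
    (subset_closure hzero)
    (fun {a b} ha hb => by
      have : Set.MapsTo (fun w : A × A => w.1 + w.2) (Sx ×ˢ Sx) Sx := by
        rintro ⟨w1, w2⟩ ⟨hw1, hw2⟩
        exact hadd hw1 hw2
      have hmem : (a, b) ∈ closure (Sx ×ˢ Sx) := by
        rw [closure_prod_eq]
        exact ⟨ha, hb⟩
      simpa using map_mem_closure (f := fun w : A × A => w.1 + w.2)
        (continuous_fst.add continuous_snd) hmem this)
    (fun {a} ha => map_mem_closure (f := fun w : A => -w) continuous_neg ha
      (fun w hw => hneg hw))
    (fun {r s} hs => map_mem_closure (f := fun w : A => r * w)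
      (continuous_mul_left r) hs (hmull r))
    (fun {s r} hs => map_mem_closure (f := fun w : A => w * r)
      (continuous_mul_right r) hs (hmulr r)) with hT
  have hTcl : IsClosed (T : Set A) := by
    rw [hT, TwoSidedIdeal.coe_mk']
    exact isClosed_closure
  have hTgen : ∀ f : C(X, ℂ), f x = 0 → η f ∈ T := by
    intro f hf
    rw [hT, TwoSidedIdeal.mem_mk']
    exact subset_closure ⟨[(f, 1)], by simpa using hf, by simp⟩
  have hle := hIsmallest x T hTcl hTgen
  have hcT : c ∈ closure Sx := by
    have := hle hc
    rwa [hT, TwoSidedIdeal.mem_mk'] at this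
  rw [Metric.mem_closure_iff] at hcT
  obtain ⟨s, hsmem, hdist⟩ := hcT ε hε
  obtain ⟨l, hl1, rfl⟩ := hsmem
  refine ⟨l.map fun p => (((‖p.2‖ : ℝ) : ℂ) • p.1, ((‖p.2‖ : ℝ) : ℂ)⁻¹ • p.2), ?_, ?_, ?_⟩
  · intro p hp
    rcases List.mem_map.1 hp with ⟨q, hq, rfl⟩
    simp [hl1 q hq]
  · intro p hp
    rcases List.mem_map.1 hp with ⟨q, hq, rfl⟩
    rcases eq_or_ne q.2 0 with h | h
    · simp [h]
    · simp only [norm_smul, norm_inv]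
      rw [Complex.norm_real, Real.norm_eq_abs, abs_of_nonneg (norm_nonneg _),
        inv_mul_cancel₀ (norm_ne_zero_iff.2 h)]
  · rw [list_normalize η l, ← dist_eq_norm]
    exact hdist

end Span

lemma part_of_unity (U : X → Set X) (hUo : ∀ x, IsOpen (U x)) (hUx : ∀ x, x ∈ U x) :
    ∃ (t : Finset X) (g : X → C(X, ℝ)),
      (∀ i y, 0 ≤ g i y) ∧ (∀ y, ∑ i ∈ t, g i y = 1) ∧
      (∀ i y, y ∉ U i → g i y = 0) := by
  have key : ∀ x : X, ∃ (V : Set X) (f : C(X, ℝ)), IsOpen V ∧ x ∈ V ∧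
      (∀ y, y ∉ U x → f y = 0) ∧ (∀ y ∈ V, f y = 1) ∧ (∀ y, f y ∈ Set.Icc (0:ℝ) 1) := by
    intro x
    obtain ⟨V, hVo, hxV, hVc⟩ := normal_exists_closure_subset
      (isClosed_singleton (x := x)) (hUo x) (by simpa using hUx x)
    obtain ⟨f, hf0, hf1, hficc⟩ := exists_continuous_zero_one_of_isClosed
      (isClosed_compl_iff.2 (hUo x)) isClosed_closure
      (Set.disjoint_left.2 fun y hyc hyV => hyc (hVc hyV))
    refine ⟨V, f, hVo, by simpa using hxV, ?_, ?_, hficc⟩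
    · intro y hy
      exact hf0 hy
    · intro y hy
      exact hf1 (subset_closure hy)
  choose V f hVo hxV hf0 hf1 hficc using key
  obtain ⟨t, ht⟩ := IsCompact.elim_finite_subcover isCompact_univ V hVo
    (fun y _ => Set.mem_iUnion.2 ⟨y, hxV y⟩)
  set H : C(X, ℝ) := ∑ i ∈ t, f i with hH
  have hH1 : ∀ y, 1 ≤ H y := by
    intro y
    obtain ⟨i, hit, hyV⟩ : ∃ i ∈ t, y ∈ V i := by simpa using ht (Set.mem_univ y)
    have h2 : H y = ∑ i ∈ t, f i y := by simp [hH]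
    rw [h2]
    calc (1:ℝ) = f i y := (hf1 i y hyV).symm
      _ ≤ ∑ i ∈ t, f i y :=
        Finset.single_le_sum (f := fun i => f i y) (fun j _ => (hficc j y).1) hit
  have hHpos : ∀ y, 0 < H y := fun y => lt_of_lt_of_le one_pos (hH1 y)
  refine ⟨t, fun i => ⟨fun y => f i y / H y,
    (f i).continuous.div H.continuous (fun y => (hHpos y).ne')⟩, ?_, ?_, ?_⟩
  · intro i y
    exact div_nonneg (hficc i y).1 (hHpos y).le
  · intro y
    have h3 : ∑ i ∈ t, (f i y / H y) = (∑ i ∈ t, f i y) / H y := (Finset.sum_div t _ _).symm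
    have h4 : (∑ i ∈ t, f i y) = H y := by simp [hH]
    simp only [ContinuousMap.coe_mk]
    rw [h3, h4, div_self (hHpos y).ne']
  · intro i y hy
    simp [hf0 i y hy]

lemma listsum_apply (L : List C(X, ℝ)) (y : X) : (L.sum) y = (L.map fun h => h y).sum := by
  induction L with
  | nil => simp
  | cons a tl ih => simp [ih]

lemma list_sum_eq_range {M : Type*} [AddCommMonoid M] (f : C(X, ℂ) × A → M)
    (hf : f (0, 0) = 0) :
    ∀ (l : List (C(X, ℂ) × A)) (N : ℕ), l.length ≤ N →
      (l.map f).sum = ∑ k ∈ Finset.range N, f (l.getD k (0, 0)) := by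
  intro l
  induction l with
  | nil =>
    intro N _
    simp only [List.map_nil, List.sum_nil]
    rw [Finset.sum_congr rfl fun k _ =>
      show f (([] : List (C(X, ℂ) × A)).getD k (0,0)) = 0 by rw [List.getD_nil]; exact hf]
    simp
  | cons a tl ih =>
    intro N hN
    obtain ⟨N', rfl⟩ : ∃ N', N = N' + 1 := ⟨N - 1, by simp at hN; omega⟩
    rw [Finset.sum_range_succ']
    simp only [List.getD_cons_succ, List.getD_cons_zero]
    rw [← ih N' (by simpa using hN)]
    simp [add_comm]

lemma normG (η : C(X, ℂ) →⋆ₐ[ℂ] A)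
    (hcentral : ∀ (f : C(X, ℂ)) (c : A), η f * c = c * η f)
    (I : X → TwoSidedIdeal A)
    (hIsmallest : ∀ x, ∀ L : TwoSidedIdeal A, IsClosed (L : Set A) →
      (∀ f : C(X, ℂ), f x = 0 → η f ∈ L) → I x ≤ L)
    (r : A) (M : ℝ) (hM : 0 ≤ M)
    (h : ∀ x : X, ∃ c ∈ I x, ‖r - c‖ ≤ M) : ‖r‖ ≤ M := by
  classical
  refine le_of_forall_pos_le_add fun ε hε => ?_
  have hε2 : 0 < ε / 2 := by positivity
  choose c hcI hcn using h
  have happrox := fun x => approx_mem η hcentral I hIsmallest x (hcI x) hε2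
  choose l hl0 hl1 hln using happrox
  set s : X → A := fun x => ((l x).map fun p => η p.1 * p.2).sum with hs
  set φ : X → C(X, ℝ) := fun x => ((l x).map fun p : C(X, ℂ) × A =>
      (⟨fun y => ‖p.1 y‖, continuous_norm.comp p.1.continuous⟩ : C(X, ℝ))).sum with hφ
  have hφ_apply : ∀ x y, φ x y = ((l x).map fun p => ‖p.1 y‖).sum := by
    intro x y
    rw [hφ]
    rw [listsum_apply]
    rw [List.map_map]
    rfl
  have hφ0 : ∀ x, φ x x = 0 := by
    intro x
    rw [hφ_apply]
    apply List.sum_eq_zero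
    intro a ha
    rcases List.mem_map.1 ha with ⟨q, hq, rfl⟩
    simp [hl0 x q hq]
  set U : X → Set X := fun x => {y | φ x y < ε / 2} with hU
  have hUo : ∀ x, IsOpen (U x) := fun x => isOpen_lt (φ x).continuous continuous_const
  have hUx : ∀ x, x ∈ U x := fun x => by simp [hU, hφ0 x, hε2]
  obtain ⟨t, g, hgnn, hgsum, hgvan⟩ := part_of_unity U hUo hUx
  set N : ℕ := t.sup fun x => (l x).length with hN
  set pr : X → ℕ → C(X, ℂ) × A := fun x k => (l x).getD k (0, 0) with hpr
  set A1 : A := ∑ x ∈ t, η (oR (g x)) * (r - c x) with hA1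
  set A2 : A := ∑ x ∈ t, η (oR (g x)) * (c x - s x) with hA2
  set A3 : A := ∑ x ∈ t, η (oR (g x)) * s x with hA3
  have hoRnorm : ∀ x y, ‖(oR (g x)) y‖ = g x y := by
    intro x y
    rw [oR_apply, Complex.norm_real, Real.norm_eq_abs, abs_of_nonneg (hgnn x y)]
  have hdec : A1 + A2 + A3 = r := by
    rw [hA1, hA2, hA3, ← Finset.sum_add_distrib, ← Finset.sum_add_distrib]
    have h1 : ∀ x ∈ t, η (oR (g x)) * (r - c x) + η (oR (g x)) * (c x - s x)
        + η (oR (g x)) * s x = η (oR (g x)) * r := by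
      intro x _
      rw [← mul_add, ← mul_add, sub_add_sub_cancel, sub_add_cancel]
    rw [Finset.sum_congr rfl h1, ← Finset.sum_mul, ← map_sum, ← oR_sum]
    have h2 : (∑ x ∈ t, g x) = (1 : C(X, ℝ)) := by
      ext y
      simpa using hgsum y
    rw [h2]
    have h3 : oR (1 : C(X, ℝ)) = 1 := by
      ext y
      simp
    rw [h3, map_one, one_mul]
  have hA1n : ‖A1‖ ≤ 1 * M := by
    rw [hA1]
    refine trick η hcentral t (fun x => oR (g x)) (fun x => r - c x) zero_le_one hM
      (fun x _ => hcn x) (fun y => ?_)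
    rw [Finset.sum_congr rfl fun x _ => hoRnorm x y]
    rw [hgsum y]
  have hA2n : ‖A2‖ ≤ 1 * (ε / 2) := by
    rw [hA2]
    refine trick η hcentral t (fun x => oR (g x)) (fun x => c x - s x) zero_le_one hε2.le
      (fun x _ => (hln x).le) (fun y => ?_)
    rw [Finset.sum_congr rfl fun x _ => hoRnorm x y]
    rw [hgsum y]
  have hA3eq : A3 = ∑ p ∈ t ×ˢ Finset.range N,
      η (oR (g p.1) * (pr p.1 p.2).1) * (pr p.1 p.2).2 := by
    rw [hA3, Finset.sum_product]
    refine Finset.sum_congr rfl fun x hx => ?_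
    rw [show s x = ((l x).map fun p => η p.1 * p.2).sum from rfl]
    rw [list_sum_eq_range (fun p => η p.1 * p.2) (by simp) (l x) N
      (Finset.le_sup (f := fun x => (l x).length) hx)]
    rw [Finset.mul_sum]
    refine Finset.sum_congr rfl fun k _ => ?_
    rw [map_mul, mul_assoc]
  have hA3n : ‖A3‖ ≤ (ε / 2) * 1 := by
    rw [hA3eq]
    refine trick η hcentral (t ×ˢ Finset.range N)
      (fun p => oR (g p.1) * (pr p.1 p.2).1) (fun p => (pr p.1 p.2).2)
      hε2.le zero_le_one (fun p hp => ?_) (fun y => ?_)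
    · show ‖(pr p.1 p.2).2‖ ≤ 1
      by_cases hk : p.2 < (l p.1).length
      · have : pr p.1 p.2 ∈ l p.1 := by
          rw [hpr]
          simp only []
          rw [List.getD_eq_getElem (l p.1) (0,0) hk]
          exact List.getElem_mem hk
        exact hl1 p.1 _ this
      · have : pr p.1 p.2 = (0, 0) := by
          rw [hpr]
          simp only []
          exact List.getD_eq_default _ _ (by omega)
        rw [this]
        simp
    · rw [Finset.sum_product]
      have h5 : ∀ x ∈ t, ∑ k ∈ Finset.range N, ‖(oR (g x) * (pr x k).1) y‖
          = g x y * φ x y := by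
        intro x hx
        rw [hφ_apply]
        rw [list_sum_eq_range (fun p => ‖p.1 y‖) (by simp) (l x) N
          (Finset.le_sup (f := fun x => (l x).length) hx)]
        rw [Finset.mul_sum]
        refine Finset.sum_congr rfl fun k _ => ?_
        rw [ContinuousMap.mul_apply, norm_mul, hoRnorm x y]
      rw [Finset.sum_congr rfl h5]
      have h6 : ∀ x ∈ t, g x y * φ x y ≤ g x y * (ε / 2) := by
        intro x _
        by_cases hyU : y ∈ U x
        · exact mul_le_mul_of_nonneg_left (le_of_lt hyU) (hgnn x y)
        · rw [hgvan x y hyU]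
          simp
      refine (Finset.sum_le_sum h6).trans ?_
      rw [← Finset.sum_mul, hgsum y, one_mul]
  calc ‖r‖ = ‖A1 + A2 + A3‖ := by rw [hdec]
    _ ≤ ‖A1‖ + ‖A2‖ + ‖A3‖ := norm_add₃_le
    _ ≤ 1 * M + 1 * (ε / 2) + (ε / 2) * 1 := by
        exact add_le_add (add_le_add hA1n hA2n) hA3n
    _ = M + ε := by ring

end Aux

/-- Let `X` be a compact Hausdorff space, `A` a unital C*-algebra, and
`η : C(X, ℂ) → A` a unital *-homomorphism with central range.  For `x ∈ X` let `I x` be the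
smallest closed two-sided ideal containing `{η f : f x = 0}`, and for a closed `K ⊆ X` let
`I_K = ⋂_{x ∈ K} I x`.  Let `a, b ∈ A` be positive and `K ⊆ X` closed with: (i) `a, b ∈ I x`
for all `x ∉ K`; (ii) the image of `a` in `A/I_K` is Cuntz subequivalent to the image of `b`.
Then `a` is Cuntz subequivalent to `b` in `A`. -/
theorem cuntz_subequiv_of_fiberwise
    {X : Type*} [TopologicalSpace X] [CompactSpace X] [T2Space X]
    {A : Type*} [CStarAlgebra A] [PartialOrder A] [StarOrderedRing A]
    (η : C(X, ℂ) →⋆ₐ[ℂ] A) (hcentral : ∀ (f : C(X, ℂ)) (c : A), η f * c = c * η f)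
    (I : X → TwoSidedIdeal A)
    (hIclosed : ∀ x, IsClosed (I x : Set A))
    (hIcontains : ∀ x, ∀ f : C(X, ℂ), f x = 0 → η f ∈ I x)
    (hIsmallest : ∀ x, ∀ L : TwoSidedIdeal A, IsClosed (L : Set A) →
      (∀ f : C(X, ℂ), f x = 0 → η f ∈ L) → I x ≤ L)
    (a b : A) (ha : 0 ≤ a) (hb : 0 ≤ b)
    (K : Set X) (hKclosed : IsClosed K)
    (hvanish : ∀ x : X, x ∉ K → a ∈ I x ∧ b ∈ I x)
    (hsub : ∀ ε : ℝ, 0 < ε → ∃ v : A,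
      Metric.infDist (a - v * b * star v) (⋂ x ∈ K, (I x : Set A)) < ε) :
    ∀ ε : ℝ, 0 < ε → ∃ w : A, ‖a - w * b * star w‖ < ε := by
  intro ε hε
  obtain ⟨v, hv⟩ := hsub (ε / 4) (by positivity)
  have hSne : ((⋂ x ∈ K, (I x : Set A)) : Set A).Nonempty :=
    ⟨0, Set.mem_iInter₂.2 fun x _ => (I x).zero_mem⟩
  rw [Metric.infDist_lt_iff hSne] at hv
  obtain ⟨c, hcmem, hcd⟩ := hv
  have hcmem' : ∀ x ∈ K, c ∈ I x := fun x hx => Set.mem_iInter₂.1 hcmem x hx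
  set r : A := a - v * b * star v with hr
  have key : ∀ x : X, ∃ c' ∈ I x, ‖r - c'‖ ≤ ε / 2 := by
    intro x
    by_cases hx : x ∈ K
    · refine ⟨c, hcmem' x hx, ?_⟩
      rw [← dist_eq_norm]
      exact le_of_lt (lt_of_lt_of_le hcd (by linarith))
    · refine ⟨r, ?_, by simp; positivity⟩
      have hbI : v * b * star v ∈ I x :=
        (I x).mul_mem_right _ _ ((I x).mul_mem_left _ _ (hvanish x hx).2)
      exact (I x).sub_mem (hvanish x hx).1 hbI
  have hnorm : ‖r‖ ≤ ε / 2 := normG η hcentral I hIsmallest r (ε / 2) (by positivity) key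
  exact ⟨v, lt_of_le_of_lt hnorm (by linarith)⟩
end

section
/- Let D be a unital C*-algebra and γ a *-automorphism of D. Let M_γ = {a ∈ C([0,1], D) : a(1) = γ(a(0))} and C_per = {a ∈ C([0,1], D) : a(0) = a(1)} (a copy of C(S¹, D)). Then the following are equivalent: (1) there exists a *-algebra isomorphism φ : C_per → M_γ such that φ(f·a) = f·φ(a) for every f ∈ C([0,1], ℂ) with f(0) = f(1) and every a ∈ C_per, where (f·a)(t) = f(t) a(t); (2) γ is homotopic to id_D in Aut(D), i.e., there exists a family (ψ_t)_{t ∈ [0,1]} of *-automorphisms of D with ψ₀ = id_D, ψ₁ = γ, and such that for every d ∈ D the map t ↦ ψ_t(d) from [0,1] to D is norm-continuous. -/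
/-- The unit interval `[0,1] ⊆ ℝ`. -/
def I01 : Set ℝ := Set.Icc 0 1

lemma zero_mem_I01 : (0 : ℝ) ∈ I01 := by norm_num [I01]

lemma one_mem_I01 : (1 : ℝ) ∈ I01 := by norm_num [I01]

/-- The mapping torus `M_γ = {a ∈ C([0,1], D) : a(1) = γ(a(0))}`, as a subset of
`C([0,1], D)`. -/
def mappingTorusSet {D : Type*} [CStarAlgebra D] (γ : D ≃⋆ₐ[ℂ] D) : Set C(I01, D) :=
  {a | a ⟨1, one_mem_I01⟩ = γ (a ⟨0, zero_mem_I01⟩)}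

/-- `C_per = {a ∈ C([0,1], D) : a(0) = a(1)}`, a copy of `C(S¹, D)`. -/
def periodicSet (D : Type*) [CStarAlgebra D] : Set C(I01, D) :=
  {a | a ⟨0, zero_mem_I01⟩ = a ⟨1, one_mem_I01⟩}

/-! From a homotopy `ψ` one gets the isomorphism `a ↦ (t ↦ ψ_t (a t))`; it lands in continuous
maps because *-automorphisms of a C*-algebra are isometries, so pointwise continuity of `ψ`
suffices.

Conversely, a `C(S¹)`-linear isomorphism `φ` is fibrewise: factoring `a = √‖a‖ • (√‖a‖⁻¹ • a)`
with both factors again periodic (or in `M_γ`) shows that `φ a` vanishes at `t` exactly when `a`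
does. Hence `E_t d = φ (const d) t` is a *-automorphism of `D` (onto, since `M_γ` has a section
through every point of every fibre), continuous in `t`, with `E_1 = γ ∘ E_0`, and
`ψ_t = E_t ∘ E_0⁻¹` is the homotopy. -/

open scoped NNReal

section
variable {X E F : Type*} [TopologicalSpace X]

theorem Continuous.apply_of_lipschitzWith [PseudoEMetricSpace E] [PseudoEMetricSpace F]
    {Ψ : X → E → F} {K : ℝ≥0} (hΨ : ∀ t, LipschitzWith K (Ψ t))
    (hcont : ∀ x, Continuous fun t => Ψ t x) {a : X → E} (ha : Continuous a) :
    Continuous fun t => Ψ t (a t) :=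
  (continuous_prod_of_continuous_lipschitzWith (fun p : E × X => Ψ p.2 p.1) K hcont hΨ).comp
    (ha.prodMk continuous_id)

theorem continuous_symm_apply_of_isometry [PseudoMetricSpace E] [PseudoMetricSpace F]
    {Ψ : X → E ≃ F} (hΨ : ∀ t, Isometry (Ψ t)) (hcont : ∀ x, Continuous fun t => Ψ t x)
    (y : F) : Continuous fun t => (Ψ t).symm y := by
  refine continuous_iff_continuousAt.2 fun s => ?_
  have hdist : ∀ t, dist ((Ψ t).symm y) ((Ψ s).symm y) = dist y (Ψ t ((Ψ s).symm y)) :=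
    fun t => by rw [← (hΨ t).dist_eq, Equiv.apply_symm_apply]
  rw [ContinuousAt, tendsto_iff_dist_tendsto_zero]
  simp only [hdist]
  simpa using (continuous_const (y := y) |>.dist (hcont ((Ψ s).symm y))).tendsto s
end

section
variable {𝕜 E : Type*} [RCLike 𝕜] [NormedAddCommGroup E] [NormedSpace 𝕜 E]

theorem norm_sqrt_norm_inv_smul (x : E) : ‖((√‖x‖ : ℝ) : 𝕜)⁻¹ • x‖ = √‖x‖ := by
  rw [norm_smul, norm_inv, RCLike.norm_ofReal, abs_of_nonneg (Real.sqrt_nonneg _),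
    inv_mul_eq_div, Real.div_sqrt]

theorem continuous_sqrt_norm_inv_smul :
    Continuous fun x : E => ((√‖x‖ : ℝ) : 𝕜)⁻¹ • x := by
  refine continuous_iff_continuousAt.2 fun x => ?_
  have hsqrt : Continuous fun x : E => √‖x‖ := Real.continuous_sqrt.comp continuous_norm
  rcases eq_or_ne x 0 with rfl | hx
  · rw [ContinuousAt, smul_zero, tendsto_zero_iff_norm_tendsto_zero]
    simpa [norm_sqrt_norm_inv_smul] using hsqrt.tendsto 0
  · refine ((RCLike.continuous_ofReal.comp hsqrt).continuousAt.inv₀ ?_).smul continuousAt_id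
    simpa using hx
end

section MappingTorus
variable {D : Type*} [CStarAlgebra D] {γ : D ≃⋆ₐ[ℂ] D}

theorem mappingTorusSet_refl : mappingTorusSet (StarAlgEquiv.refl ℂ D) = periodicSet D :=
  Set.ext fun _ => eq_comm

theorem const_mem_periodicSet (d : D) : ContinuousMap.const I01 d ∈ periodicSet D := rfl

theorem sub_mem_mappingTorusSet {a b : C(I01, D)} (ha : a ∈ mappingTorusSet γ)
    (hb : b ∈ mappingTorusSet γ) : a - b ∈ mappingTorusSet γ := by
  simp only [mappingTorusSet, Set.mem_ofPred_eq, ContinuousMap.sub_apply, map_sub] at *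
  rw [ha, hb]

theorem smul_mem_mappingTorusSet {f : C(I01, ℂ)} (hf : f ∈ periodicSet ℂ) {a : C(I01, D)}
    (ha : a ∈ mappingTorusSet γ) : f • a ∈ mappingTorusSet γ := by
  simp only [periodicSet, mappingTorusSet, Set.mem_ofPred_eq, ContinuousMap.smul_apply',
    map_smul] at *
  rw [ha, hf]

theorem sub_mem_periodicSet {a b : C(I01, D)} (ha : a ∈ periodicSet D) (hb : b ∈ periodicSet D) :
    a - b ∈ periodicSet D := by
  rw [← mappingTorusSet_refl] at *
  exact sub_mem_mappingTorusSet ha hb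

theorem smul_mem_periodicSet {f : C(I01, ℂ)} (hf : f ∈ periodicSet ℂ) {a : C(I01, D)}
    (ha : a ∈ periodicSet D) : f • a ∈ periodicSet D := by
  rw [← mappingTorusSet_refl] at ha ⊢
  exact smul_mem_mappingTorusSet hf ha

theorem exists_smul_eq_of_mem_mappingTorusSet {b : C(I01, D)} (hb : b ∈ mappingTorusSet γ) :
    ∃ g ∈ periodicSet ℂ, ∃ u ∈ mappingTorusSet γ, g • u = b ∧ ∀ t, b t = 0 → g t = 0 := by
  have hb' : b ⟨1, one_mem_I01⟩ = γ (b ⟨0, zero_mem_I01⟩) := hb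
  refine ⟨⟨fun t => (√‖b t‖ : ℂ), by fun_prop⟩, ?_,
    ⟨fun t => ((√‖b t‖ : ℝ) : ℂ)⁻¹ • b t, continuous_sqrt_norm_inv_smul.comp b.continuous⟩, ?_,
    ?_, fun t hbt => by simp [hbt]⟩
  · simp [periodicSet, hb', StarAlgEquiv.norm_map]
  · simp [mappingTorusSet, hb', StarAlgEquiv.norm_map]
  · ext t
    rcases eq_or_ne (b t) 0 with hbt | hbt
    · simp [hbt]
    · simp [smul_smul, hbt]

variable (γ) in
/-- Piecewise linear in `s` and equal to `d` at `s = t`; its values `(1 - t) • d + t • γ⁻¹ d` at `0`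
and `t • d + (1 - t) • γ d` at `1` differ by `γ`. -/
noncomputable def mappingTorusSection (t : I01) (d : D) : C(I01, D) :=
  ⟨fun s => ((1 - |s.1 - t.1| : ℝ) : ℂ) • d + ((max 0 (s.1 - t.1) : ℝ) : ℂ) • γ d
      + ((max 0 (t.1 - s.1) : ℝ) : ℂ) • γ.symm d,
    by fun_prop⟩

theorem mappingTorusSection_apply_self (t : I01) (d : D) :
    mappingTorusSection γ t d t = d := by
  simp [mappingTorusSection]

theorem mappingTorusSection_mem (t : I01) (d : D) :
    mappingTorusSection γ t d ∈ mappingTorusSet γ := by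
  obtain ⟨t, ht0, ht1⟩ := t
  simp only [mappingTorusSet, mappingTorusSection, Set.mem_ofPred_eq, ContinuousMap.coe_mk,
    map_add, map_smul, StarAlgEquiv.apply_symm_apply]
  rw [abs_of_nonneg (by linarith : (0:ℝ) ≤ 1 - t), abs_of_nonpos (by linarith : (0:ℝ) - t ≤ 0),
    max_eq_right (by linarith : (0:ℝ) ≤ 1 - t), max_eq_left (by linarith : t - 1 ≤ 0),
    max_eq_left (by linarith : (0:ℝ) - t ≤ 0), max_eq_right (by linarith : (0:ℝ) ≤ t - 0)]
  push_cast
  module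

end MappingTorus

section Trivialization
variable {D : Type*} [CStarAlgebra D]

structure IsCircleTrivialization (γ : D ≃⋆ₐ[ℂ] D) (φ : C(I01, D) → C(I01, D)) : Prop where
  bijOn : Set.BijOn φ (periodicSet D) (mappingTorusSet γ)
  map_add : ∀ a ∈ periodicSet D, ∀ b ∈ periodicSet D, φ (a + b) = φ a + φ b
  map_mul : ∀ a ∈ periodicSet D, ∀ b ∈ periodicSet D, φ (a * b) = φ a * φ b
  map_star : ∀ a ∈ periodicSet D, φ (star a) = star (φ a)
  map_smul : ∀ (c : ℂ), ∀ a ∈ periodicSet D, φ (c • a) = c • φ a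
  map_smul_periodic : ∀ f ∈ periodicSet ℂ, ∀ a ∈ periodicSet D, φ (f • a) = f • φ a

namespace IsCircleTrivialization
variable {γ : D ≃⋆ₐ[ℂ] D} {φ : C(I01, D) → C(I01, D)} (h : IsCircleTrivialization γ φ)
include h

theorem map_sub {a b : C(I01, D)} (ha : a ∈ periodicSet D) (hb : b ∈ periodicSet D) :
    φ (a - b) = φ a - φ b :=
  eq_sub_of_add_eq (by rw [← h.map_add _ (sub_mem_periodicSet ha hb) _ hb, sub_add_cancel])

theorem apply_eq_zero_iff {a : C(I01, D)} (ha : a ∈ periodicSet D) (t : I01) :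
    φ a t = 0 ↔ a t = 0 := by
  constructor
  · intro hφa
    obtain ⟨g, hg, u, hu, hgu, hg0⟩ := exists_smul_eq_of_mem_mappingTorusSet (h.bijOn.mapsTo ha)
    obtain ⟨a', ha', rfl⟩ := h.bijOn.surjOn hu
    have hga' : g • a' ∈ periodicSet D := smul_mem_periodicSet hg ha'
    have : a = g • a' := h.bijOn.injOn ha hga' (by rw [h.map_smul_periodic g hg a' ha', hgu])
    rw [this, ContinuousMap.smul_apply', hg0 t hφa, zero_smul]
  · intro hat
    rw [← mappingTorusSet_refl] at ha
    obtain ⟨g, hg, u, hu, rfl, hg0⟩ := exists_smul_eq_of_mem_mappingTorusSet ha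
    rw [mappingTorusSet_refl] at hu
    rw [h.map_smul_periodic g hg u hu, ContinuousMap.smul_apply', hg0 t hat, zero_smul]

theorem apply_eq_apply_iff {a b : C(I01, D)} (ha : a ∈ periodicSet D) (hb : b ∈ periodicSet D)
    (t : I01) : φ a t = φ b t ↔ a t = b t := by
  rw [← sub_eq_zero, ← ContinuousMap.sub_apply, ← h.map_sub ha hb,
    h.apply_eq_zero_iff (sub_mem_periodicSet ha hb), ContinuousMap.sub_apply, sub_eq_zero]

noncomputable def fiberHom (t : I01) : D →⋆ₙₐ[ℂ] D where
  toFun d := φ (ContinuousMap.const I01 d) t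
  map_smul' c d := ContinuousMap.congr_fun (h.map_smul c _ (const_mem_periodicSet d)) t
  map_zero' := (h.apply_eq_zero_iff (const_mem_periodicSet 0) t).2 rfl
  map_add' d e :=
    ContinuousMap.congr_fun (h.map_add _ (const_mem_periodicSet d) _ (const_mem_periodicSet e)) t
  map_mul' d e :=
    ContinuousMap.congr_fun (h.map_mul _ (const_mem_periodicSet d) _ (const_mem_periodicSet e)) t
  map_star' d := ContinuousMap.congr_fun (h.map_star _ (const_mem_periodicSet d)) t

theorem fiberHom_injective (t : I01) : Function.Injective (h.fiberHom t) := fun d e hde =>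
  (h.apply_eq_apply_iff (const_mem_periodicSet d) (const_mem_periodicSet e) t).1 hde

theorem fiberHom_surjective (t : I01) : Function.Surjective (h.fiberHom t) := fun d => by
  obtain ⟨a, ha, hφa⟩ := h.bijOn.surjOn (mappingTorusSection_mem t d)
  exact ⟨a t, ((h.apply_eq_apply_iff (const_mem_periodicSet _) ha t).2 rfl).trans
    (by rw [hφa, mappingTorusSection_apply_self])⟩

noncomputable def fiber (t : I01) : D ≃⋆ₐ[ℂ] D :=
  StarAlgEquiv.ofBijective (h.fiberHom t) ⟨h.fiberHom_injective t, h.fiberHom_surjective t⟩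

theorem fiber_one_apply (d : D) :
    h.fiber ⟨1, one_mem_I01⟩ d = γ (h.fiber ⟨0, zero_mem_I01⟩ d) :=
  h.bijOn.mapsTo (const_mem_periodicSet d)

theorem continuous_fiber_apply (d : D) : Continuous fun t => h.fiber t d :=
  (φ _).continuous

theorem exists_homotopy : ∃ ψ : I01 → (D ≃⋆ₐ[ℂ] D),
    ψ ⟨0, zero_mem_I01⟩ = StarAlgEquiv.refl ℂ D ∧ ψ ⟨1, one_mem_I01⟩ = γ ∧
    ∀ d : D, Continuous fun t : I01 => ψ t d := by
  refine ⟨fun t => (h.fiber ⟨0, zero_mem_I01⟩).symm.trans (h.fiber t), ?_, ?_,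
    fun d => h.continuous_fiber_apply _⟩
  · exact StarAlgEquiv.ext fun d => by simp
  · exact StarAlgEquiv.ext fun d => by simp [fiber_one_apply]

end IsCircleTrivialization
end Trivialization

section Homotopy
variable {D : Type*} [CStarAlgebra D]

noncomputable def pointwiseApply {X : Type*} [TopologicalSpace X] (ψ : X → D ≃⋆ₐ[ℂ] D)
    (hψ : ∀ d, Continuous fun t => ψ t d) (a : C(X, D)) : C(X, D) :=
  ⟨fun t => ψ t (a t),
    a.continuous.apply_of_lipschitzWith (fun t => (StarAlgEquiv.isometry (ψ t)).lipschitz) hψ⟩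

theorem isCircleTrivialization_pointwiseApply {γ : D ≃⋆ₐ[ℂ] D} {ψ : I01 → D ≃⋆ₐ[ℂ] D}
    (h0 : ψ ⟨0, zero_mem_I01⟩ = StarAlgEquiv.refl ℂ D) (h1 : ψ ⟨1, one_mem_I01⟩ = γ)
    (hψ : ∀ d, Continuous fun t => ψ t d) :
    IsCircleTrivialization γ (pointwiseApply ψ hψ) := by
  have hψsymm : ∀ d, Continuous fun t => (ψ t).symm d :=
    continuous_symm_apply_of_isometry (Ψ := fun t => (ψ t).toRingEquiv.toEquiv)
      (fun t => StarAlgEquiv.isometry (ψ t)) hψ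
  refine ⟨⟨fun a ha => ?_, fun a _ b _ hab => ?_, fun b hb => ?_⟩, fun a _ b _ => ?_,
    fun a _ b _ => ?_, fun a _ => ?_, fun c a _ => ?_, fun f _ a _ => ?_⟩
  · have ha : a ⟨0, zero_mem_I01⟩ = a ⟨1, one_mem_I01⟩ := ha
    simp [mappingTorusSet, pointwiseApply, h0, h1, ha]
  · ext t
    exact (ψ t).injective (ContinuousMap.congr_fun hab t)
  · refine ⟨pointwiseApply (fun t => (ψ t).symm) hψsymm b, ?_, ?_⟩
    · have hb : b ⟨1, one_mem_I01⟩ = γ (b ⟨0, zero_mem_I01⟩) := hb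
      simp [periodicSet, pointwiseApply, h0, h1, hb]
    · ext t
      simp [pointwiseApply]
  all_goals ext t; simp [pointwiseApply, map_star]
end Homotopy

/-- Let `D` be a unital C*-algebra and `γ` a *-automorphism of `D`.  The
mapping torus `M_γ` is trivial as a `C(S¹)`-algebra, i.e. there is a `C(S¹)`-linear *-algebra
isomorphism `C(S¹, D) → M_γ`, if and only if `γ` is homotopic to `id` in `Aut(D)`. -/
theorem mappingTorus_trivial_iff_homotopic_to_id
    {D : Type*} [CStarAlgebra D] (γ : D ≃⋆ₐ[ℂ] D) :
    (∃ φ : C(I01, D) → C(I01, D),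
      Set.BijOn φ (periodicSet D) (mappingTorusSet γ) ∧
      (∀ a ∈ periodicSet D, ∀ b ∈ periodicSet D,
        φ (a + b) = φ a + φ b ∧ φ (a * b) = φ a * φ b) ∧
      (∀ a ∈ periodicSet D, φ (star a) = star (φ a)) ∧
      (∀ (c : ℂ), ∀ a ∈ periodicSet D, φ (c • a) = c • φ a) ∧
      (∀ f : C(I01, ℂ), f ⟨0, zero_mem_I01⟩ = f ⟨1, one_mem_I01⟩ →
        ∀ a ∈ periodicSet D, φ (f • a) = f • φ a)) ↔
    (∃ ψ : I01 → (D ≃⋆ₐ[ℂ] D),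
      ψ ⟨0, zero_mem_I01⟩ = StarAlgEquiv.refl ℂ D ∧ ψ ⟨1, one_mem_I01⟩ = γ ∧
      ∀ d : D, Continuous fun t : I01 => ψ t d) := by
  constructor
  · rintro ⟨φ, hbij, hops, hstar, hsmul, hperiodic⟩
    exact IsCircleTrivialization.exists_homotopy ⟨hbij, fun a ha b hb => (hops a ha b hb).1,
      fun a ha b hb => (hops a ha b hb).2, hstar, hsmul, hperiodic⟩
  · rintro ⟨ψ, h0, h1, hψ⟩
    have h := isCircleTrivialization_pointwiseApply h0 h1 hψ
    exact ⟨_, h.bijOn, fun a ha b hb => ⟨h.map_add a ha b hb, h.map_mul a ha b hb⟩, h.map_star,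
      h.map_smul, h.map_smul_periodic⟩
end

section
/- Let X be a compact Hausdorff space and let (U_i)_{i ∈ I} be a finite open cover of X. Then there exist a subset J ⊆ I and an open cover (V_j)_{j ∈ J} of X such that for every k ∈ J, the closure of V_k is contained in U_k, and V_k ∖ ⋃_{j ∈ J, j ≠ k} closure(V_j) is nonempty. -/
/-!
Pass to a minimal subcover `(U j)_{j ∈ J}`: by minimality every `U k` has a point `x` lying in no
other `U j`. Shrinking this cover (compact Hausdorff spaces are normal) gives `V` with
`closure (V j) ⊆ U j`; then `x` avoids every `closure (V j)`, `j ≠ k`, so the shrunk cover can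
only catch `x` in `V k`.
-/

open Set

section

variable {X ι : Type*}

theorem Minimal.exists_mem_notMem_biUnion_diff {u : ι → Set X} {J : Set ι}
    (hJ : Minimal (fun J : Set ι => ⋃ j ∈ J, u j = univ) J) {k : ι} (hk : k ∈ J) :
    ∃ x ∈ u k, x ∉ ⋃ j ∈ J \ {k}, u j := by
  have hne : ⋃ j ∈ J \ {k}, u j ≠ univ :=
    hJ.not_prop_of_lt (sdiff_singleton_ssubset.2 hk)
  obtain ⟨x, hx⟩ := (ne_univ_iff_exists_notMem _).1 hne
  obtain ⟨j, hj, hxj⟩ := mem_iUnion₂.1 (hJ.prop ▸ mem_univ x : x ∈ ⋃ j ∈ J, u j)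
  obtain rfl : j = k := by_contra fun hjk => hx (mem_biUnion ⟨hj, hjk⟩ hxj)
  exact ⟨x, hxj, hx⟩

theorem exists_biUnion_eq_closure_subset [TopologicalSpace X] [NormalSpace X]
    {u : ι → Set X} {J : Set ι} (huo : ∀ j ∈ J, IsOpen (u j))
    (huf : ∀ x, {i | x ∈ u i}.Finite) (hJ : ⋃ j ∈ J, u j = univ) :
    ∃ v : ι → Set X, (∀ i, IsOpen (v i)) ∧ ⋃ j ∈ J, v j = univ ∧ ∀ j ∈ J, closure (v j) ⊆ u j := by
  classical
  -- Extend `u` by `∅` off `J`, so that the shrunk sets vanish off `J`.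
  set u' : ι → Set X := fun i => if i ∈ J then u i else ∅
  have hu'o : ∀ i, IsOpen (u' i) := fun i => by
    by_cases hi : i ∈ J <;> simp [u', hi, huo]
  have hu'f : ∀ x, {i | x ∈ u' i}.Finite := fun x =>
    (huf x).subset fun i hi => by by_cases h : i ∈ J <;> simp_all [u']
  have hu'U : ⋃ i, u' i = univ := by
    rw [← hJ]; ext x; simp [u']
  obtain ⟨v, hvU, hvo, hvu'⟩ := exists_iUnion_eq_closure_subset hu'o hu'f hu'U
  have hv_notMem : ∀ i ∉ J, v i = ∅ := fun i hi =>
    subset_empty_iff.1 (subset_closure.trans <| by simpa [u', hi] using hvu' i)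
  refine ⟨v, hvo, ?_, fun j hj => by simpa [u', hj] using hvu' j⟩
  rw [← hvU]
  refine Subset.antisymm (iUnion₂_subset fun i _ => subset_iUnion v i) (iUnion_subset fun i => ?_)
  by_cases hi : i ∈ J
  · exact subset_biUnion_of_mem hi
  · simp [hv_notMem i hi]

end

/-- Let `X` be a compact Hausdorff space and `(Uᵢ)_{i ∈ I}` a finite open
cover of `X`.  Then there exist a subset `J ⊆ I` and an open cover `(Vⱼ)_{j ∈ J}` of `X` such
that for every `k ∈ J` the closure of `Vₖ` is contained in `Uₖ`, and
`Vₖ \ ⋃_{j ∈ J, j ≠ k} closure(Vⱼ)` is nonempty. -/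
theorem exists_shrinking_with_nonempty_differences
    {X : Type*} [TopologicalSpace X] [CompactSpace X] [T2Space X]
    {I : Type*} [Finite I] (U : I → Set X)
    (hUopen : ∀ i, IsOpen (U i)) (hUcover : (⋃ i, U i) = Set.univ) :
    ∃ (J : Set I) (V : I → Set X),
      (∀ j ∈ J, IsOpen (V j)) ∧ (⋃ j ∈ J, V j) = Set.univ ∧
      ∀ k ∈ J, closure (V k) ⊆ U k ∧
        (V k \ ⋃ j ∈ J \ {k}, closure (V j)).Nonempty := by
  obtain ⟨J, hJ⟩ := exists_minimal_of_wellFoundedLT (fun J : Set I => ⋃ j ∈ J, U j = univ)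
    ⟨univ, by rwa [biUnion_univ]⟩
  obtain ⟨V, hVopen, hVcover, hVU⟩ := exists_biUnion_eq_closure_subset
    (fun j _ => hUopen j) (fun _ => toFinite _) hJ.prop
  refine ⟨J, V, fun j _ => hVopen j, hVcover, fun k hk => ⟨hVU k hk, ?_⟩⟩
  obtain ⟨x, -, hx⟩ := hJ.exists_mem_notMem_biUnion_diff hk
  have hx_closure : x ∉ ⋃ j ∈ J \ {k}, closure (V j) :=
    fun h => hx (biUnion_mono subset_rfl (fun j hj => hVU j hj.1) h)
  obtain ⟨j, hj, hxj⟩ := mem_iUnion₂.1 (hVcover ▸ mem_univ x : x ∈ ⋃ j ∈ J, V j)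
  obtain rfl : j = k := by_contra fun hjk =>
    hx_closure (mem_biUnion ⟨hj, hjk⟩ (subset_closure hxj))
  exact ⟨x, hxj, hx_closure⟩
end
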